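/- arXiv:2207.07271 — 11 statements merged into one kernel-verified Lean document; each statement's English description precedes it below -/
import Mathlib

section
/- Suppose ℳ ⊆ 𝒫 is nonempty, compact, s-rectangular, and all its parameters (C,P) satisfy P s a ∈ Δ_S for all s, a. Then ℳ satisfies the containment condition with respect to the Bellman operator f and with respect to the policy evaluation operator g^π for every policy π: for every V ∈ ℝ^S there exist parameters m̲, m̄ ∈ ℳ such that f_s(V, m̲) = inf_{m ∈ ℳ} f_s(V, m) simultaneously for every s ∈ Fin S, and f_s(V, m̄) = sup_{m ∈ ℳ} f_s(V, m) simultaneously for every s ∈ Fin S (and likewise with f replaced by g^π). -/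
/-- The space of MDP parameters `(C, P)`. -/
abbrev Param (S A : ℕ) := (Fin S → Fin A → ℝ) × (Fin S → Fin A → Fin S → ℝ)

/-- The probability simplex over `Fin k`. -/
def simplex (k : ℕ) : Set (Fin k → ℝ) := {p | (∀ i, 0 ≤ p i) ∧ ∑ i, p i = 1}

/-- The Bellman operator. -/
noncomputable def bellman (S A : ℕ) (γ : ℝ) (V : Fin S → ℝ) (m : Param S A) :
    Fin S → ℝ :=
  fun s => ⨅ a : Fin A, (m.1 s a + γ * ∑ s', m.2 s a s' * V s')

/-- The policy evaluation operator. -/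
noncomputable def polEval (S A : ℕ) (γ : ℝ) (π : Fin S → Fin A → ℝ)
    (V : Fin S → ℝ) (m : Param S A) : Fin S → ℝ :=
  fun s => ∑ a, π s a * (m.1 s a + γ * ∑ s', m.2 s a s' * V s')

/-!
For each state `s` separately, compactness and continuity give a parameter in `ℳ` minimising
(or maximising) the `s`-th component of the operator. By s-rectangularity, the parameter whose
`s`-th row is taken from the minimiser chosen for `s` lies again in `ℳ`; since the `s`-th
component of `f` and of `g^π` only depends on the `s`-th row, it is a simultaneous minimiser.
-/

lemma continuous_ciInf_of_finite {X ι L : Type*} [TopologicalSpace X] [Finite ι]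
    [ConditionallyCompleteLinearOrder L] [TopologicalSpace L] [OrderClosedTopology L]
    {f : ι → X → L} (hf : ∀ i, Continuous (f i)) : Continuous fun x => ⨅ i, f i x := by
  cases isEmpty_or_nonempty ι
  · simp only [iInf_of_isEmpty]
    exact continuous_const
  · have := Fintype.ofFinite ι
    simp only [← Finset.inf'_univ_eq_ciInf]
    exact Continuous.finset_inf'_apply _ fun i _ => hf i

namespace Param

variable {S A : ℕ}

def IsSRectangular (M : Set (Param S A)) : Prop :=
  ∃ Ms : Fin S → Set ((Fin A → ℝ) × (Fin A → Fin S → ℝ)),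
    ∀ m : Param S A, m ∈ M ↔ ∀ s, (m.1 s, m.2 s) ∈ Ms s

def IsRowwise {β : Type*} (F : Param S A → Fin S → β) : Prop :=
  ∀ m m' : Param S A, ∀ s, m.1 s = m'.1 s → m.2 s = m'.2 s → F m s = F m' s

def glue (m : Fin S → Param S A) : Param S A :=
  (fun s => (m s).1 s, fun s => (m s).2 s)

lemma IsSRectangular.glue_mem {M : Set (Param S A)} (hM : IsSRectangular M)
    {m : Fin S → Param S A} (hm : ∀ s, m s ∈ M) : glue m ∈ M := by
  obtain ⟨Ms, hMs⟩ := hM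
  exact (hMs _).2 fun s => (hMs (m s)).1 (hm s) s

lemma IsRowwise.apply_glue {β : Type*} {F : Param S A → Fin S → β} (hF : IsRowwise F)
    (m : Fin S → Param S A) (s : Fin S) : F (glue m) s = F (m s) s :=
  hF _ _ s rfl rfl

lemma IsSRectangular.exists_forall_of_forall_exists {β : Type*} {M : Set (Param S A)}
    (hM : IsSRectangular M) {F : Param S A → Fin S → β} (hF : IsRowwise F)
    {p : Fin S → β → Prop} (h : ∀ s, ∃ m ∈ M, p s (F m s)) :
    ∃ m ∈ M, ∀ s, p s (F m s) := by
  choose m hmM hm using h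
  exact ⟨glue m, hM.glue_mem hmM, fun s => hF.apply_glue m s ▸ hm s⟩

lemma IsSRectangular.exists_forall_eq_sInf_and_exists_forall_eq_sSup {L : Type*}
    [ConditionallyCompleteLinearOrder L] [TopologicalSpace L] [OrderClosedTopology L]
    {M : Set (Param S A)} (hM : IsSRectangular M) (hne : M.Nonempty) (hcpt : IsCompact M)
    {F : Param S A → Fin S → L} (hF : IsRowwise F) (hcont : ∀ s, Continuous (F · s)) :
    (∃ ml ∈ M, ∀ s, F ml s = sInf ((fun m => F m s) '' M)) ∧
      (∃ mu ∈ M, ∀ s, F mu s = sSup ((fun m => F m s) '' M)) := by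
  constructor
  · refine hM.exists_forall_of_forall_exists (p := fun s y => y = sInf _) hF fun s => ?_
    obtain ⟨m, hm, h⟩ := hcpt.exists_sInf_image_eq hne (hcont s).continuousOn
    exact ⟨m, hm, h.symm⟩
  · refine hM.exists_forall_of_forall_exists (p := fun s y => y = sSup _) hF fun s => ?_
    obtain ⟨m, hm, h⟩ := hcpt.exists_sSup_image_eq hne (hcont s).continuousOn
    exact ⟨m, hm, h.symm⟩

end Param

open Param

section Operators

variable (S A : ℕ) (γ : ℝ) (V : Fin S → ℝ)

lemma isRowwise_bellman : IsRowwise (bellman S A γ V) := by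
  intro m m' s h1 h2
  simp only [bellman, h1, h2]

lemma isRowwise_polEval (π : Fin S → Fin A → ℝ) : IsRowwise (polEval S A γ π V) := by
  intro m m' s h1 h2
  simp only [polEval, h1, h2]

lemma continuous_bellman_apply (s : Fin S) : Continuous fun m => bellman S A γ V m s :=
  continuous_ciInf_of_finite fun a => by fun_prop

lemma continuous_polEval_apply (π : Fin S → Fin A → ℝ) (s : Fin S) :
    Continuous fun m => polEval S A γ π V m s := by
  unfold polEval
  fun_prop

end Operators

theorem sRectangular_satisfies_containment_general (S A : ℕ)
    (γ : ℝ)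
    (M : Set (Param S A)) (hMne : M.Nonempty) (hMcp : IsCompact M)
    (hrect : ∃ Ms : Fin S → Set ((Fin A → ℝ) × (Fin A → Fin S → ℝ)),
      ∀ m : Param S A, m ∈ M ↔ ∀ s, (m.1 s, m.2 s) ∈ Ms s) :
    (∀ V : Fin S → ℝ,
      (∃ ml ∈ M, ∀ s, bellman S A γ V ml s
          = sInf ((fun m => bellman S A γ V m s) '' M)) ∧
      (∃ mu ∈ M, ∀ s, bellman S A γ V mu s
          = sSup ((fun m => bellman S A γ V m s) '' M))) ∧
    (∀ π : Fin S → Fin A → ℝ, (∀ s, π s ∈ simplex A) →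
      ∀ V : Fin S → ℝ,
      (∃ ml ∈ M, ∀ s, polEval S A γ π V ml s
          = sInf ((fun m => polEval S A γ π V m s) '' M)) ∧
      (∃ mu ∈ M, ∀ s, polEval S A γ π V mu s
          = sSup ((fun m => polEval S A γ π V m s) '' M))) := by
  have hM : IsSRectangular M := hrect
  exact ⟨fun V => hM.exists_forall_eq_sInf_and_exists_forall_eq_sSup hMne hMcp
      (isRowwise_bellman S A γ V) (continuous_bellman_apply S A γ V),
    fun π _ V => hM.exists_forall_eq_sInf_and_exists_forall_eq_sSup hMne hMcp
      (isRowwise_polEval S A γ V π) (continuous_polEval_apply S A γ V π)⟩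

/-- a nonempty, compact, s-rectangular parameter set `ℳ` (with rows in the
simplex) satisfies the containment condition with respect to the Bellman operator and
with respect to every policy evaluation operator. -/
theorem sRectangular_satisfies_containment (S A : ℕ) (hS : 0 < S) (hA : 0 < A)
    (γ : ℝ) (hγ0 : 0 < γ) (hγ1 : γ < 1)
    (M : Set (Param S A)) (hMne : M.Nonempty) (hMcp : IsCompact M)
    (hMrow : ∀ m ∈ M, ∀ s a, m.2 s a ∈ simplex S)
    (hrect : ∃ Ms : Fin S → Set ((Fin A → ℝ) × (Fin A → Fin S → ℝ)),
      ∀ m : Param S A, m ∈ M ↔ ∀ s, (m.1 s, m.2 s) ∈ Ms s) :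
    (∀ V : Fin S → ℝ,
      (∃ ml ∈ M, ∀ s, bellman S A γ V ml s
          = sInf ((fun m => bellman S A γ V m s) '' M)) ∧
      (∃ mu ∈ M, ∀ s, bellman S A γ V mu s
          = sSup ((fun m => bellman S A γ V m s) '' M))) ∧
    (∀ π : Fin S → Fin A → ℝ, (∀ s, π s ∈ simplex A) →
      ∀ V : Fin S → ℝ,
      (∃ ml ∈ M, ∀ s, polEval S A γ π V ml s
          = sInf ((fun m => polEval S A γ π V m s) '' M)) ∧
      (∃ mu ∈ M, ∀ s, polEval S A γ π V mu s
          = sSup ((fun m => polEval S A γ π V m s) '' M))) :=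
  sRectangular_satisfies_containment_general S A γ M hMne hMcp hrect
end

section
/- Let h be a value operator on ℝ^S × ℳ with contraction constant α ∈ [0,1) and ℳ nonempty and compact, and let H(𝒱) = { h(V,m) : V ∈ 𝒱, m ∈ ℳ }. Then H is an α-contraction on the space of nonempty compact subsets of ℝ^S equipped with the Hausdorff distance, i.e., d_H(H(𝒱), H(𝒲)) ≤ α·d_H(𝒱, 𝒲) for all nonempty compact 𝒱, 𝒲 ⊆ ℝ^S, and consequently there is a unique nonempty compact set 𝒱* ⊆ ℝ^S with H(𝒱*) = 𝒱*. -/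
/-!
Each `h V m` with `V ∈ 𝒱` is matched by `h W m` with the same `m` and `W ∈ 𝒲` nearest to `V`;
since `h · m` is an `α`-contraction, this gives the Hausdorff bound. Joint continuity of `h`
on `ℝ^S × ℳ` makes `H` map nonempty compact sets to nonempty compact sets, and the space of
these is complete for the Hausdorff metric, so Banach's fixed point theorem applies.
-/

open Metric TopologicalSpace Set NNReal Function

section HausdorffBound

variable {X Y P : Type*} [PseudoMetricSpace X] [PseudoMetricSpace Y]
  {h : X → P → Y} {M : Set P} {K : ℝ≥0}

theorem exists_mem_image2_dist_le_mul_hausdorffDist (hh : ∀ m ∈ M, LipschitzWith K (h · m))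
    {U W : Set X} (hW : IsCompact W) (hWne : W.Nonempty) (hUW : hausdorffEDist U W ≠ ⊤) :
    ∀ y ∈ image2 h U M, ∃ z ∈ image2 h W M, dist y z ≤ K * hausdorffDist U W := by
  rintro _ ⟨V, hV, m, hm, rfl⟩
  obtain ⟨W', hW', hVW'⟩ := hW.exists_infDist_eq_dist hWne V
  refine ⟨h W' m, mem_image2_of_mem hW' hm, ?_⟩
  calc dist (h V m) (h W' m) ≤ K * dist V W' := (hh m hm).dist_le_mul V W'
    _ ≤ K * hausdorffDist U W := by
      gcongr
      exact hVW' ▸ infDist_le_hausdorffDist_of_mem hV hUW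

theorem hausdorffDist_image2_le (hh : ∀ m ∈ M, LipschitzWith K (h · m)) {U W : Set X}
    (hU : IsCompact U) (hUne : U.Nonempty) (hW : IsCompact W) (hWne : W.Nonempty) :
    hausdorffDist (image2 h U M) (image2 h W M) ≤ K * hausdorffDist U W := by
  have hUW : hausdorffEDist U W ≠ ⊤ :=
    hausdorffEDist_ne_top_of_nonempty_of_bounded hUne hWne hU.isBounded hW.isBounded
  refine hausdorffDist_le_of_mem_dist (mul_nonneg K.2 hausdorffDist_nonneg)
    (exists_mem_image2_dist_le_mul_hausdorffDist hh hW hWne hUW) ?_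
  rw [hausdorffDist_comm]
  exact exists_mem_image2_dist_le_mul_hausdorffDist hh hU hUne (by rwa [hausdorffEDist_comm])

end HausdorffBound

namespace TopologicalSpace.NonemptyCompacts

variable {X P : Type*} [MetricSpace X] [TopologicalSpace P]
  {h : X → P → X} {M : NonemptyCompacts P}

/-- `U ↦ image2 h U M`, well defined on nonempty compact sets when `h` is jointly continuous. -/
def image2Right (h : X → P → X) (M : NonemptyCompacts P)
    (hc : ContinuousOn (uncurry h) (univ ×ˢ (M : Set P))) (U : NonemptyCompacts X) :
    NonemptyCompacts X where
  carrier := image2 h U M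
  isCompact' := by
    rw [← image_prod]
    exact (U.isCompact.prod M.isCompact).image_of_continuousOn
      (hc.mono (Set.prod_mono (subset_univ _) subset_rfl))
  nonempty' := U.nonempty.image2 M.nonempty

@[simp]
theorem coe_image2Right (hc : ContinuousOn (uncurry h) (univ ×ˢ (M : Set P)))
    (U : NonemptyCompacts X) : (image2Right h M hc U : Set X) = image2 h U M :=
  rfl

theorem lipschitzWith_image2Right {K : ℝ≥0} (hc : ContinuousOn (uncurry h) (univ ×ˢ (M : Set P)))
    (hh : ∀ m ∈ M, LipschitzWith K (h · m)) : LipschitzWith K (image2Right h M hc) :=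
  LipschitzWith.of_dist_le_mul fun U W => by
    simpa only [Metric.NonemptyCompacts.dist_eq, coe_image2Right] using
      hausdorffDist_image2_le hh U.isCompact U.nonempty W.isCompact W.nonempty

theorem existsUnique_image2_eq_self [CompleteSpace X] [Nonempty X] {K : ℝ≥0} (hK : K < 1)
    (hc : ContinuousOn (uncurry h) (univ ×ˢ (M : Set P)))
    (hh : ∀ m ∈ M, LipschitzWith K (h · m)) :
    ∃! V : Set X, (V.Nonempty ∧ IsCompact V) ∧ image2 h V M = V := by
  have hF : ContractingWith K (image2Right h M hc) := ⟨hK, lipschitzWith_image2Right hc hh⟩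
  set V := ContractingWith.fixedPoint _ hF
  refine ⟨V, ⟨⟨V.nonempty, V.isCompact⟩, congrArg SetLike.coe hF.fixedPoint_isFixedPt⟩, ?_⟩
  rintro W ⟨⟨hWne, hW⟩, hWfix⟩
  exact congrArg SetLike.coe
    (hF.fixedPoint_unique (x := ⟨⟨W, hW⟩, hWne⟩) (NonemptyCompacts.ext hWfix))

end TopologicalSpace.NonemptyCompacts

theorem setValueOperator_contraction_general (S A : ℕ)
    (M : Set (Param S A)) (hMne : M.Nonempty) (hMcp : IsCompact M)
    (h : (Fin S → ℝ) → Param S A → (Fin S → ℝ))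
    (α : ℝ) (hα0 : 0 ≤ α) (hα1 : α < 1)
    (hcontr : ∀ (V V' : Fin S → ℝ), ∀ m ∈ M, ‖h V m - h V' m‖ ≤ α * ‖V - V'‖)
    (hlip : ∀ V : Fin S → ℝ, ∃ K : ℝ, 0 ≤ K ∧
      ∀ m ∈ M, ∀ m' ∈ M, ‖h V m - h V m'‖ ≤ K * dist m m') :
    (∀ 𝒱 𝒲 : Set (Fin S → ℝ), 𝒱.Nonempty → IsCompact 𝒱 → 𝒲.Nonempty → IsCompact 𝒲 →
      Metric.hausdorffDist (Set.image2 h 𝒱 M) (Set.image2 h 𝒲 M)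
        ≤ α * Metric.hausdorffDist 𝒱 𝒲) ∧
    (∃! 𝒱star : Set (Fin S → ℝ),
      (𝒱star.Nonempty ∧ IsCompact 𝒱star) ∧ Set.image2 h 𝒱star M = 𝒱star) := by
  lift α to ℝ≥0 using hα0
  have hα : ∀ m ∈ M, LipschitzWith α (h · m) := fun m hm =>
    LipschitzWith.of_dist_le_mul fun V V' => by
      simpa only [dist_eq_norm] using hcontr V V' m hm
  have hc : ContinuousOn (uncurry h) (univ ×ˢ M) := by
    refine continuousOn_prod_of_continuousOn_lipschitzOnWith _ α (fun V _ => ?_)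
      fun m hm => (hα m hm).lipschitzOnWith
    obtain ⟨K, hK0, hK⟩ := hlip V
    refine (LipschitzOnWith.of_dist_le_mul (K := ⟨K, hK0⟩) fun m hm m' hm' => ?_).continuousOn
    rw [dist_eq_norm]
    exact hK m hm m' hm'
  exact ⟨fun 𝒱 𝒲 h𝒱ne h𝒱 h𝒲ne h𝒲 => hausdorffDist_image2_le hα h𝒱 h𝒱ne h𝒲 h𝒲ne,
    NonemptyCompacts.existsUnique_image2_eq_self (M := ⟨⟨M, hMcp⟩, hMne⟩)
      (by exact_mod_cast hα1) hc hα⟩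

/-- the set-based value operator `H(𝒱) = {h(V,m) : V ∈ 𝒱, m ∈ ℳ}` is an
α-contraction in the Hausdorff distance on nonempty compact subsets of `ℝ^S`, and it has
a unique nonempty compact fixed point set. -/
theorem setValueOperator_contraction (S A : ℕ) (hS : 0 < S) (hA : 0 < A)
    (M : Set (Param S A)) (hMne : M.Nonempty) (hMcp : IsCompact M)
    (h : (Fin S → ℝ) → Param S A → (Fin S → ℝ))
    (α : ℝ) (hα0 : 0 ≤ α) (hα1 : α < 1)
    (hcontr : ∀ (V V' : Fin S → ℝ), ∀ m ∈ M, ‖h V m - h V' m‖ ≤ α * ‖V - V'‖)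
    (hmono : ∀ (V V' : Fin S → ℝ), ∀ m ∈ M, V ≤ V' → h V m ≤ h V' m)
    (hlip : ∀ V : Fin S → ℝ, ∃ K : ℝ, 0 ≤ K ∧
      ∀ m ∈ M, ∀ m' ∈ M, ‖h V m - h V m'‖ ≤ K * dist m m') :
    (∀ 𝒱 𝒲 : Set (Fin S → ℝ), 𝒱.Nonempty → IsCompact 𝒱 → 𝒲.Nonempty → IsCompact 𝒲 →
      Metric.hausdorffDist (Set.image2 h 𝒱 M) (Set.image2 h 𝒲 M)
        ≤ α * Metric.hausdorffDist 𝒱 𝒲) ∧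
    (∃! 𝒱star : Set (Fin S → ℝ),
      (𝒱star.Nonempty ∧ IsCompact 𝒱star) ∧ Set.image2 h 𝒱star M = 𝒱star) :=
  setValueOperator_contraction_general S A M hMne hMcp h α hα0 hα1 hcontr hlip
end

section
/- Let h be a value operator on ℝ^S × ℳ with ℳ nonempty and compact, let H(𝒱) = { h(V,m) : V ∈ 𝒱, m ∈ ℳ }, and let 𝒱* be the unique nonempty compact set with H(𝒱*) = 𝒱*. Then for every nonempty compact set 𝒱⁰ ⊆ ℝ^S, the sequence defined by 𝒱^{k+1} = H(𝒱^k) converges to 𝒱* in the Hausdorff distance, i.e., d_H(𝒱^k, 𝒱*) → 0 as k → ∞. -/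
section Aux

open Metric Set

variable {S A : ℕ}

/-- One-sided Hausdorff estimate for the image2 operator. -/
lemma infDist_image2_le
    (M : Set (Param S A)) (h : (Fin S → ℝ) → Param S A → (Fin S → ℝ))
    (α : ℝ) (hα0 : 0 ≤ α)
    (hcontr : ∀ (V V' : Fin S → ℝ), ∀ m ∈ M, ‖h V m - h V' m‖ ≤ α * ‖V - V'‖)
    (U U' : Set (Fin S → ℝ)) (hUne : U.Nonempty) (hU'ne : U'.Nonempty)
    (hUb : Bornology.IsBounded U) (hU'b : Bornology.IsBounded U')
    {x : Fin S → ℝ} (hx : x ∈ Set.image2 h U M) :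
    Metric.infDist x (Set.image2 h U' M) ≤ α * Metric.hausdorffDist U U' := by
  obtain ⟨V, hV, m, hm, rfl⟩ := hx
  have hne : EMetric.hausdorffEdist U U' ≠ ⊤ :=
    Metric.hausdorffEdist_ne_top_of_nonempty_of_bounded hUne hU'ne hUb hU'b
  have hVd : Metric.infDist V U' ≤ Metric.hausdorffDist U U' :=
    Metric.infDist_le_hausdorffDist_of_mem hV hne
  refine le_of_forall_pos_le_add ?_
  intro ε hε
  have hε' : (0:ℝ) < ε / (α + 1) := by positivity
  have : Metric.infDist V U' < Metric.infDist V U' + ε / (α + 1) := by linarith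
  obtain ⟨V', hV', hVV'⟩ := (Metric.infDist_lt_iff hU'ne).1 this
  have h1 : Metric.infDist (h V m) (Set.image2 h U' M) ≤ dist (h V m) (h V' m) :=
    Metric.infDist_le_dist_of_mem (Set.mem_image2_of_mem hV' hm)
  have h2 : dist (h V m) (h V' m) ≤ α * dist V V' := by
    rw [dist_eq_norm, dist_eq_norm]; exact hcontr V V' m hm
  have h3 : α * dist V V' ≤ α * (Metric.hausdorffDist U U' + ε / (α + 1)) := by
    apply mul_le_mul_of_nonneg_left _ hα0
    have := dist_comm V V' ▸ hVV'
    nlinarith [hVd]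
  have h4 : α * (ε / (α + 1)) ≤ ε := by
    rw [mul_div_assoc'] at *
    rw [div_le_iff₀ (by linarith)]
    nlinarith
  nlinarith

lemma hausdorffDist_image2_le_s6
    (M : Set (Param S A)) (h : (Fin S → ℝ) → Param S A → (Fin S → ℝ))
    (α : ℝ) (hα0 : 0 ≤ α)
    (hcontr : ∀ (V V' : Fin S → ℝ), ∀ m ∈ M, ‖h V m - h V' m‖ ≤ α * ‖V - V'‖)
    (U U' : Set (Fin S → ℝ)) (hUne : U.Nonempty) (hU'ne : U'.Nonempty)
    (hUb : Bornology.IsBounded U) (hU'b : Bornology.IsBounded U') :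
    Metric.hausdorffDist (Set.image2 h U M) (Set.image2 h U' M)
      ≤ α * Metric.hausdorffDist U U' := by
  apply Metric.hausdorffDist_le_of_infDist
    (mul_nonneg hα0 Metric.hausdorffDist_nonneg)
  · intro x hx
    exact infDist_image2_le M h α hα0 hcontr U U' hUne hU'ne hUb hU'b hx
  · intro x hx
    rw [Metric.hausdorffDist_comm]
    exact infDist_image2_le M h α hα0 hcontr U' U hU'ne hUne hU'b hUb hx

end Aux

/-- set-based value iteration `𝒱^{k+1} = H(𝒱^k)` converges to the fixed
point set `𝒱*` in the Hausdorff distance, from any nonempty compact initial set. -/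
theorem setValueIteration_converges (S A : ℕ) (hS : 0 < S) (hA : 0 < A)
    (M : Set (Param S A)) (hMne : M.Nonempty) (hMcp : IsCompact M)
    (h : (Fin S → ℝ) → Param S A → (Fin S → ℝ))
    (α : ℝ) (hα0 : 0 ≤ α) (hα1 : α < 1)
    (hcontr : ∀ (V V' : Fin S → ℝ), ∀ m ∈ M, ‖h V m - h V' m‖ ≤ α * ‖V - V'‖)
    (hmono : ∀ (V V' : Fin S → ℝ), ∀ m ∈ M, V ≤ V' → h V m ≤ h V' m)
    (hlip : ∀ V : Fin S → ℝ, ∃ K : ℝ, 0 ≤ K ∧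
      ∀ m ∈ M, ∀ m' ∈ M, ‖h V m - h V m'‖ ≤ K * dist m m')
    (𝒱star : Set (Fin S → ℝ)) (h𝒱star : 𝒱star.Nonempty ∧ IsCompact 𝒱star ∧
      Set.image2 h 𝒱star M = 𝒱star)
    (𝒱seq : ℕ → Set (Fin S → ℝ))
    (h0ne : (𝒱seq 0).Nonempty) (h0cp : IsCompact (𝒱seq 0))
    (hrec : ∀ k, 𝒱seq (k + 1) = Set.image2 h (𝒱seq k) M) :
    Filter.Tendsto (fun k => Metric.hausdorffDist (𝒱seq k) 𝒱star)
      Filter.atTop (nhds 0) := by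
  obtain ⟨hsne, hscp, hsfix⟩ := h𝒱star
  -- each iterate is nonempty and bounded
  have hMb : Bornology.IsBounded M := hMcp.isBounded
  have key : ∀ k, (𝒱seq k).Nonempty ∧ Bornology.IsBounded (𝒱seq k) := by
    intro k
    induction k with
    | zero => exact ⟨h0ne, h0cp.isBounded⟩
    | succ k ih =>
      obtain ⟨hne, hb⟩ := ih
      constructor
      · rw [hrec k]; exact hne.image2 hMne
      · rw [hrec k]
        obtain ⟨V0, hV0⟩ := hne
        obtain ⟨m0, hm0⟩ := hMne
        obtain ⟨K, hK0, hK⟩ := hlip V0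
        obtain ⟨R, hR⟩ := hb.subset_closedBall V0
        obtain ⟨R', hR'⟩ := hMb.subset_closedBall m0
        rw [Metric.isBounded_iff_subset_closedBall (h V0 m0)]
        refine ⟨α * R + K * R', ?_⟩
        rintro x ⟨V, hV, m, hm, rfl⟩
        have h1 : dist (h V m) (h V0 m) ≤ α * dist V V0 := by
          rw [dist_eq_norm, dist_eq_norm]; exact hcontr V V0 m hm
        have h2 : dist (h V0 m) (h V0 m0) ≤ K * dist m m0 := by
          rw [dist_eq_norm]; exact hK m hm m0 hm0
        have h3 : dist V V0 ≤ R := hR hV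
        have h4 : dist m m0 ≤ R' := hR' hm
        have := dist_triangle (h V m) (h V0 m) (h V0 m0)
        simp only [Metric.mem_closedBall]
        nlinarith
  -- geometric bound
  have hbound : ∀ k, Metric.hausdorffDist (𝒱seq k) 𝒱star
      ≤ α ^ k * Metric.hausdorffDist (𝒱seq 0) 𝒱star := by
    intro k
    induction k with
    | zero => simp
    | succ k ih =>
      have step : Metric.hausdorffDist (𝒱seq (k+1)) 𝒱star
          ≤ α * Metric.hausdorffDist (𝒱seq k) 𝒱star := by
        rw [hrec k]
        have := hausdorffDist_image2_le_s6 M h α hα0 hcontr (𝒱seq k) 𝒱star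
          (key k).1 hsne (key k).2 hscp.isBounded
        rwa [hsfix] at this
      calc Metric.hausdorffDist (𝒱seq (k+1)) 𝒱star
          ≤ α * Metric.hausdorffDist (𝒱seq k) 𝒱star := step
        _ ≤ α * (α ^ k * Metric.hausdorffDist (𝒱seq 0) 𝒱star) :=
            mul_le_mul_of_nonneg_left ih hα0
        _ = α ^ (k+1) * Metric.hausdorffDist (𝒱seq 0) 𝒱star := by ring
  have hgeo : Filter.Tendsto
      (fun k => α ^ k * Metric.hausdorffDist (𝒱seq 0) 𝒱star)
      Filter.atTop (nhds 0) := by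
    have := tendsto_pow_atTop_nhds_zero_of_lt_one hα0 hα1
    simpa using this.mul_const (Metric.hausdorffDist (𝒱seq 0) 𝒱star)
  exact squeeze_zero (fun k => Metric.hausdorffDist_nonneg) hbound hgeo
end

section
/- Let h be a value operator on ℝ^S × ℳ with ℳ nonempty and compact, let 𝒱* be the unique nonempty compact fixed point set of the induced set-based operator H(𝒱) = { h(V,m) : V ∈ 𝒱, m ∈ ℳ }. Let {m^k}_{k∈ℕ} ⊆ ℳ be any parameter sequence, V⁰ ∈ ℝ^S arbitrary, and define the non-stationary value iteration V^{k+1} = h(V^k, m^k). Then the point-to-set distance d(V^k, 𝒱*) = inf_{W ∈ 𝒱*} ‖V^k − W‖ converges to 0 as k → ∞. -/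
/-- for non-stationary value iteration `V^{k+1} = h(V^k, m^k)` with
`m^k ∈ ℳ`, the point-to-set distance from `V^k` to the fixed point set `𝒱*` of the
set-based operator tends to zero. -/
theorem nonstationary_valueIteration_distance_tendsto_zero
    (S A : ℕ) (hS : 0 < S) (hA : 0 < A)
    (M : Set (Param S A)) (hMne : M.Nonempty) (hMcp : IsCompact M)
    (h : (Fin S → ℝ) → Param S A → (Fin S → ℝ))
    (α : ℝ) (hα0 : 0 ≤ α) (hα1 : α < 1)
    (hcontr : ∀ (V V' : Fin S → ℝ), ∀ m ∈ M, ‖h V m - h V' m‖ ≤ α * ‖V - V'‖)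
    (hmono : ∀ (V V' : Fin S → ℝ), ∀ m ∈ M, V ≤ V' → h V m ≤ h V' m)
    (hlip : ∀ V : Fin S → ℝ, ∃ K : ℝ, 0 ≤ K ∧
      ∀ m ∈ M, ∀ m' ∈ M, ‖h V m - h V m'‖ ≤ K * dist m m')
    (𝒱star : Set (Fin S → ℝ)) (h𝒱star : 𝒱star.Nonempty ∧ IsCompact 𝒱star ∧
      Set.image2 h 𝒱star M = 𝒱star)
    (mseq : ℕ → Param S A) (hmseq : ∀ k, mseq k ∈ M)
    (Vseq : ℕ → Fin S → ℝ) (hrec : ∀ k, Vseq (k + 1) = h (Vseq k) (mseq k)) :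
    Filter.Tendsto (fun k => Metric.infDist (Vseq k) 𝒱star)
      Filter.atTop (nhds 0) := by
  obtain ⟨hne, hcp, hfix⟩ := h𝒱star
  set d : ℕ → ℝ := fun k => Metric.infDist (Vseq k) 𝒱star with hd
  have hstep : ∀ k, d (k + 1) ≤ α * d k := by
    intro k
    obtain ⟨W, hW, hWd⟩ := hcp.exists_infDist_eq_dist hne (Vseq k)
    have hWmem : h W (mseq k) ∈ 𝒱star := by
      rw [← hfix]; exact Set.mem_image2_of_mem hW (hmseq k)
    calc d (k + 1) ≤ dist (Vseq (k + 1)) (h W (mseq k)) :=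
          Metric.infDist_le_dist_of_mem hWmem
      _ = ‖h (Vseq k) (mseq k) - h W (mseq k)‖ := by rw [hrec k, dist_eq_norm]
      _ ≤ α * ‖Vseq k - W‖ := hcontr _ _ _ (hmseq k)
      _ = α * d k := by rw [← dist_eq_norm, ← hWd]
  have hgeom : ∀ k, d k ≤ α ^ k * d 0 := by
    intro k
    induction k with
    | zero => simp
    | succ n ih =>
      calc d (n + 1) ≤ α * d n := hstep n
        _ ≤ α * (α ^ n * d 0) := by
            exact mul_le_mul_of_nonneg_left ih hα0
        _ = α ^ (n + 1) * d 0 := by ring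
  have hnonneg : ∀ k, 0 ≤ d k := fun k => Metric.infDist_nonneg
  have hlim : Filter.Tendsto (fun k => α ^ k * d 0) Filter.atTop (nhds 0) := by
    have := (tendsto_pow_atTop_nhds_zero_of_lt_one hα0 hα1).mul_const (d 0)
    simpa using this
  exact squeeze_zero hnonneg hgeom hlim
end

section
/- Let h be a value operator on ℝ^S × ℳ with ℳ nonempty and compact, let 𝒱* be the unique nonempty compact fixed point set of the induced set-based operator H(𝒱) = { h(V,m) : V ∈ 𝒱, m ∈ ℳ }. Let {m^k}_{k∈ℕ} ⊆ ℳ, V⁰ ∈ ℝ^S, and V^{k+1} = h(V^k, m^k). Then there exist a strictly increasing function φ : ℕ → ℕ and a point y* ∈ 𝒱* such that the subsequence V^{φ(k)} converges to y* in the sup norm. -/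
/-- for non-stationary value iteration `V^{k+1} = h(V^k, m^k)` with
`m^k ∈ ℳ`, there is a subsequence converging to a point of the fixed point set `𝒱*`. -/
theorem nonstationary_valueIteration_subsequence_converges
    (S A : ℕ) (hS : 0 < S) (hA : 0 < A)
    (M : Set (Param S A)) (hMne : M.Nonempty) (hMcp : IsCompact M)
    (h : (Fin S → ℝ) → Param S A → (Fin S → ℝ))
    (α : ℝ) (hα0 : 0 ≤ α) (hα1 : α < 1)
    (hcontr : ∀ (V V' : Fin S → ℝ), ∀ m ∈ M, ‖h V m - h V' m‖ ≤ α * ‖V - V'‖)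
    (hmono : ∀ (V V' : Fin S → ℝ), ∀ m ∈ M, V ≤ V' → h V m ≤ h V' m)
    (hlip : ∀ V : Fin S → ℝ, ∃ K : ℝ, 0 ≤ K ∧
      ∀ m ∈ M, ∀ m' ∈ M, ‖h V m - h V m'‖ ≤ K * dist m m')
    (𝒱star : Set (Fin S → ℝ)) (h𝒱star : 𝒱star.Nonempty ∧ IsCompact 𝒱star ∧
      Set.image2 h 𝒱star M = 𝒱star)
    (mseq : ℕ → Param S A) (hmseq : ∀ k, mseq k ∈ M)
    (Vseq : ℕ → Fin S → ℝ) (hrec : ∀ k, Vseq (k + 1) = h (Vseq k) (mseq k)) :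
    ∃ φ : ℕ → ℕ, StrictMono φ ∧ ∃ ystar ∈ 𝒱star,
      Filter.Tendsto (fun k => Vseq (φ k)) Filter.atTop (nhds ystar) := by
  obtain ⟨hne, hcp, hfix⟩ := h𝒱star
  set D : ℕ → ℝ := fun k => Metric.infDist (Vseq k) 𝒱star with hD
  have hDnn : ∀ k, 0 ≤ D k := fun k => Metric.infDist_nonneg
  have hstep : ∀ k, D (k + 1) ≤ α * D k := by
    intro k
    obtain ⟨y, hy, hdy⟩ := hcp.exists_infDist_eq_dist hne (Vseq k)
    have hmem : h y (mseq k) ∈ 𝒱star := by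
      rw [← hfix]; exact Set.mem_image2_of_mem hy (hmseq k)
    calc D (k + 1) ≤ dist (Vseq (k + 1)) (h y (mseq k)) :=
          Metric.infDist_le_dist_of_mem hmem
      _ = ‖h (Vseq k) (mseq k) - h y (mseq k)‖ := by rw [hrec, dist_eq_norm]
      _ ≤ α * ‖Vseq k - y‖ := hcontr _ _ _ (hmseq k)
      _ = α * D k := by simp only [hD]; rw [hdy, dist_eq_norm]
  have hgeo : ∀ k, D k ≤ α ^ k * D 0 := by
    intro k; induction k with
    | zero => simp
    | succ n ih =>
      calc D (n + 1) ≤ α * D n := hstep n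
        _ ≤ α * (α ^ n * D 0) := by nlinarith [hDnn n]
        _ = α ^ (n + 1) * D 0 := by ring
  have hD0 : Filter.Tendsto D Filter.atTop (nhds 0) := by
    have h1 : Filter.Tendsto (fun k => α ^ k * D 0) Filter.atTop (nhds 0) := by
      simpa using (tendsto_pow_atTop_nhds_zero_of_lt_one hα0 hα1).mul_const (D 0)
    exact squeeze_zero hDnn hgeo h1
  have hbdd : ∀ k, Vseq k ∈ Metric.cthickening (D 0) 𝒱star := by
    intro k
    obtain ⟨y, hy, hdy⟩ := hcp.exists_infDist_eq_dist hne (Vseq k)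
    refine Metric.mem_cthickening_of_dist_le _ y _ _ hy ?_
    calc dist (Vseq k) y = D k := hdy.symm
      _ ≤ α ^ k * D 0 := hgeo k
      _ ≤ 1 * D 0 := by
          have := pow_le_one₀ hα0 hα1.le (n := k)
          nlinarith [hDnn 0]
      _ = D 0 := one_mul _
  have hKcp : IsCompact (Metric.cthickening (D 0) 𝒱star) := hcp.cthickening
  obtain ⟨y, hyK, φ, hφ, hconv⟩ := hKcp.tendsto_subseq hbdd
  refine ⟨φ, hφ, y, ?_, hconv⟩
  have h1 : Filter.Tendsto (fun k => Metric.infDist (Vseq (φ k)) 𝒱star)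
      Filter.atTop (nhds (Metric.infDist y 𝒱star)) :=
    (Metric.continuous_infDist_pt 𝒱star).continuousAt.tendsto.comp hconv
  have h2 : Filter.Tendsto (fun k => D (φ k)) Filter.atTop (nhds 0) :=
    hD0.comp hφ.tendsto_atTop
  have hz : Metric.infDist y 𝒱star = 0 := tendsto_nhds_unique h1 h2
  exact (hcp.isClosed.mem_iff_infDist_zero hne).mpr hz
end

section
/- Let h be a value operator on ℝ^S × ℳ with ℳ nonempty and compact, and let 𝒱* be the unique nonempty compact fixed point set of the induced set-based operator H(𝒱) = { h(V,m) : V ∈ 𝒱, m ∈ ℳ }. If m ∈ ℳ and V ∈ ℝ^S satisfy V = h(V, m), then V ∈ 𝒱*. -/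
/-- every fixed point of `h(·, m)` for a fixed `m ∈ ℳ` belongs to the
fixed point set `𝒱*` of the set-based operator. -/
theorem fixedPoint_mem_fixedPointSet (S A : ℕ) (hS : 0 < S) (hA : 0 < A)
    (M : Set (Param S A)) (hMne : M.Nonempty) (hMcp : IsCompact M)
    (h : (Fin S → ℝ) → Param S A → (Fin S → ℝ))
    (α : ℝ) (hα0 : 0 ≤ α) (hα1 : α < 1)
    (hcontr : ∀ (V V' : Fin S → ℝ), ∀ m ∈ M, ‖h V m - h V' m‖ ≤ α * ‖V - V'‖)
    (hmono : ∀ (V V' : Fin S → ℝ), ∀ m ∈ M, V ≤ V' → h V m ≤ h V' m)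
    (hlip : ∀ V : Fin S → ℝ, ∃ K : ℝ, 0 ≤ K ∧
      ∀ m ∈ M, ∀ m' ∈ M, ‖h V m - h V m'‖ ≤ K * dist m m')
    (𝒱star : Set (Fin S → ℝ)) (h𝒱star : 𝒱star.Nonempty ∧ IsCompact 𝒱star ∧
      Set.image2 h 𝒱star M = 𝒱star)
    (m : Param S A) (hm : m ∈ M) (V : Fin S → ℝ) (hV : V = h V m) :
    V ∈ 𝒱star := by
  obtain ⟨⟨V₀, hV₀⟩, hcp, himg⟩ := h𝒱star
  set seq : ℕ → (Fin S → ℝ) := fun n => (fun W => h W m)^[n] V₀ with hseq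
  have hmem : ∀ n, seq n ∈ 𝒱star := by
    intro n
    induction n with
    | zero => simpa [hseq] using hV₀
    | succ k ih =>
      have : seq (k + 1) = h (seq k) m := by
        simp [hseq, Function.iterate_succ_apply']
      rw [this, ← himg]
      exact Set.mem_image2_of_mem ih hm
  have hbound : ∀ n, ‖seq n - V‖ ≤ α ^ n * ‖V₀ - V‖ := by
    intro n
    induction n with
    | zero => simp [hseq]
    | succ k ih =>
      have h1 : seq (k + 1) - V = h (seq k) m - h V m := by
        simp [hseq, Function.iterate_succ_apply', ← hV]
      calc ‖seq (k + 1) - V‖ = ‖h (seq k) m - h V m‖ := by rw [h1]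
        _ ≤ α * ‖seq k - V‖ := hcontr _ _ m hm
        _ ≤ α * (α ^ k * ‖V₀ - V‖) := by
            exact mul_le_mul_of_nonneg_left ih hα0
        _ = α ^ (k + 1) * ‖V₀ - V‖ := by ring
  have htend : Filter.Tendsto seq Filter.atTop (nhds V) := by
    rw [tendsto_iff_norm_sub_tendsto_zero]
    have h0 : Filter.Tendsto (fun n => α ^ n * ‖V₀ - V‖) Filter.atTop (nhds 0) := by
      simpa using (tendsto_pow_atTop_nhds_zero_of_lt_one hα0 hα1).mul_const ‖V₀ - V‖
    exact squeeze_zero (fun n => norm_nonneg _) hbound h0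
  exact hcp.isClosed.mem_of_tendsto htend (Filter.Eventually.of_forall hmem)
end

section
/- Let h be a value operator on ℝ^S × ℳ with contraction constant α ∈ [0,1) and ℳ nonempty and compact. Then the bound operators h̲ and h̄, defined coordinatewise by h̲_s(V) = inf_{m ∈ ℳ} h_s(V,m) and h̄_s(V) = sup_{m ∈ ℳ} h_s(V,m), are each α-contractions on ℝ^S in the sup norm, and consequently each has a unique fixed point: there exist unique X̲, X̄ ∈ ℝ^S with h̲(X̲) = X̲ and h̄(X̄) = X̄. -/
/-- The lower bound operator `h̲_s(V) = inf_{m ∈ ℳ} h_s(V, m)`. -/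
noncomputable def loOp {S A : ℕ} (M : Set (Param S A))
    (h : (Fin S → ℝ) → Param S A → (Fin S → ℝ)) (V : Fin S → ℝ) : Fin S → ℝ :=
  fun s => sInf ((fun m => h V m s) '' M)

/-- The upper bound operator `h̄_s(V) = sup_{m ∈ ℳ} h_s(V, m)`. -/
noncomputable def hiOp {S A : ℕ} (M : Set (Param S A))
    (h : (Fin S → ℝ) → Param S A → (Fin S → ℝ)) (V : Fin S → ℝ) : Fin S → ℝ :=
  fun s => sSup ((fun m => h V m s) '' M)

/-- the bound operators `h̲` and `h̄` are α-contractions on `ℝ^S` in the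
sup norm and each has a unique fixed point. -/
theorem boundOperators_contraction (S A : ℕ) (hS : 0 < S) (hA : 0 < A)
    (M : Set (Param S A)) (hMne : M.Nonempty) (hMcp : IsCompact M)
    (h : (Fin S → ℝ) → Param S A → (Fin S → ℝ))
    (α : ℝ) (hα0 : 0 ≤ α) (hα1 : α < 1)
    (hcontr : ∀ (V V' : Fin S → ℝ), ∀ m ∈ M, ‖h V m - h V' m‖ ≤ α * ‖V - V'‖)
    (hmono : ∀ (V V' : Fin S → ℝ), ∀ m ∈ M, V ≤ V' → h V m ≤ h V' m)
    (hlip : ∀ V : Fin S → ℝ, ∃ K : ℝ, 0 ≤ K ∧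
      ∀ m ∈ M, ∀ m' ∈ M, ‖h V m - h V m'‖ ≤ K * dist m m') :
    (∀ V V' : Fin S → ℝ, ‖loOp M h V - loOp M h V'‖ ≤ α * ‖V - V'‖) ∧
    (∀ V V' : Fin S → ℝ, ‖hiOp M h V - hiOp M h V'‖ ≤ α * ‖V - V'‖) ∧
    (∃! X : Fin S → ℝ, loOp M h X = X) ∧
    (∃! X : Fin S → ℝ, hiOp M h X = X) := by
  -- boundedness of the images
  obtain ⟨C, hC⟩ := Metric.isBounded_iff.mp hMcp.isBounded
  have hbdd : ∀ (V : Fin S → ℝ) (s : Fin S),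
      BddBelow ((fun m => h V m s) '' M) ∧ BddAbove ((fun m => h V m s) '' M) := by
    intro V s
    obtain ⟨K, hK0, hKlip⟩ := hlip V
    obtain ⟨m0, hm0⟩ := hMne
    have hsub : ∀ m ∈ M, |h V m s - h V m0 s| ≤ K * C := by
      intro m hm
      calc |h V m s - h V m0 s| = ‖(h V m - h V m0) s‖ := by
              simp [Real.norm_eq_abs]
        _ ≤ ‖h V m - h V m0‖ := norm_le_pi_norm (h V m - h V m0) s
        _ ≤ K * dist m m0 := hKlip m hm m0 hm0
        _ ≤ K * C := by
            exact mul_le_mul_of_nonneg_left (hC hm hm0) hK0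
    constructor
    · refine ⟨h V m0 s - K * C, ?_⟩
      rintro x ⟨m, hm, rfl⟩
      have := (abs_sub_le_iff.mp (hsub m hm)).2
      linarith
    · refine ⟨h V m0 s + K * C, ?_⟩
      rintro x ⟨m, hm, rfl⟩
      have := (abs_sub_le_iff.mp (hsub m hm)).1
      linarith
  -- pointwise bound
  have hpt : ∀ (V V' : Fin S → ℝ) (m : Param S A), m ∈ M → ∀ s,
      |h V m s - h V' m s| ≤ α * ‖V - V'‖ := by
    intro V V' m hm s
    calc |h V m s - h V' m s| = ‖(h V m - h V' m) s‖ := by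
            simp [Real.norm_eq_abs]
      _ ≤ ‖h V m - h V' m‖ := norm_le_pi_norm (h V m - h V' m) s
      _ ≤ α * ‖V - V'‖ := hcontr V V' m hm
  have hne : ∀ (V : Fin S → ℝ) (s : Fin S), ((fun m => h V m s) '' M).Nonempty :=
    fun V s => hMne.image _
  -- contraction of loOp
  have hlo : ∀ V V' : Fin S → ℝ, ‖loOp M h V - loOp M h V'‖ ≤ α * ‖V - V'‖ := by
    intro V V'
    have hαn : 0 ≤ α * ‖V - V'‖ := mul_nonneg hα0 (norm_nonneg _)
    rw [pi_norm_le_iff_of_nonneg hαn]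
    intro s
    have key : ∀ W W' : Fin S → ℝ,
        sInf ((fun m => h W m s) '' M) - sInf ((fun m => h W' m s) '' M) ≤ α * ‖W - W'‖ := by
      intro W W'
      have : sInf ((fun m => h W m s) '' M) - α * ‖W - W'‖ ≤ sInf ((fun m => h W' m s) '' M) := by
        apply le_csInf (hne W' s)
        rintro x ⟨m, hm, rfl⟩
        have h1 : sInf ((fun m => h W m s) '' M) ≤ h W m s :=
          csInf_le (hbdd W s).1 ⟨m, hm, rfl⟩
        have h2 := (abs_sub_le_iff.mp (hpt W W' m hm s)).1
        have hnn : ‖W - W'‖ = ‖W' - W‖ := by rw [norm_sub_rev]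
        linarith
      linarith
    have h1 := key V V'
    have h2 := key V' V
    rw [norm_sub_rev V' V] at h2
    simp only [Pi.sub_apply, Real.norm_eq_abs, loOp]
    rw [abs_sub_le_iff]
    exact ⟨h1, h2⟩
  -- contraction of hiOp
  have hhi : ∀ V V' : Fin S → ℝ, ‖hiOp M h V - hiOp M h V'‖ ≤ α * ‖V - V'‖ := by
    intro V V'
    have hαn : 0 ≤ α * ‖V - V'‖ := mul_nonneg hα0 (norm_nonneg _)
    rw [pi_norm_le_iff_of_nonneg hαn]
    intro s
    have key : ∀ W W' : Fin S → ℝ,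
        sSup ((fun m => h W m s) '' M) - sSup ((fun m => h W' m s) '' M) ≤ α * ‖W - W'‖ := by
      intro W W'
      have : sSup ((fun m => h W m s) '' M) ≤ sSup ((fun m => h W' m s) '' M) + α * ‖W - W'‖ := by
        apply csSup_le (hne W s)
        rintro x ⟨m, hm, rfl⟩
        have h1 : h W' m s ≤ sSup ((fun m => h W' m s) '' M) :=
          le_csSup (hbdd W' s).2 ⟨m, hm, rfl⟩
        have h2 := (abs_sub_le_iff.mp (hpt W W' m hm s)).1
        linarith
      linarith
    have h1 := key V V'
    have h2 := key V' V
    rw [norm_sub_rev V' V] at h2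
    simp only [Pi.sub_apply, Real.norm_eq_abs, hiOp]
    rw [abs_sub_le_iff]
    exact ⟨h1, h2⟩
  -- fixed points via Banach
  have fix : ∀ f : (Fin S → ℝ) → (Fin S → ℝ),
      (∀ V V' : Fin S → ℝ, ‖f V - f V'‖ ≤ α * ‖V - V'‖) → ∃! X, f X = X := by
    intro f hf
    have hlw : LipschitzWith α.toNNReal f := by
      apply LipschitzWith.of_dist_le_mul
      intro x y
      rw [dist_eq_norm, dist_eq_norm, Real.coe_toNNReal α hα0]
      exact hf x y
    have hcw : ContractingWith α.toNNReal f := by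
      constructor
      · rw [← NNReal.coe_lt_one, Real.coe_toNNReal α hα0]
        exact hα1
      · exact hlw
    exact ⟨hcw.fixedPoint f, hcw.fixedPoint_isFixedPt,
      fun y hy => hcw.fixedPoint_unique hy⟩
  exact ⟨hlo, hhi, fix _ hlo, fix _ hhi⟩
end

section
/- Let h be a value operator on ℝ^S × ℳ with ℳ nonempty and compact, let 𝒱* be the unique nonempty compact fixed point set of the induced set-based operator H(𝒱) = { h(V,m) : V ∈ 𝒱, m ∈ ℳ }, and let X̲, X̄ ∈ ℝ^S be the unique fixed points of the bound operators h̲_s(V) = inf_{m ∈ ℳ} h_s(V,m) and h̄_s(V) = sup_{m ∈ ℳ} h_s(V,m). Then X̲ ≤ V ≤ X̄ componentwise for every V ∈ 𝒱*. -/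
/-- On a compact set, a nonnegative continuous function that shrinks by a factor
`α < 1` under the step relation must vanish. -/
lemma shrink_zero {X : Type*} [TopologicalSpace X] (K : Set X) (hne : K.Nonempty)
    (hcp : IsCompact K) (e : X → ℝ) (he : Continuous e) (henn : ∀ x, 0 ≤ e x)
    (α : ℝ) (hα0 : 0 ≤ α) (hα1 : α < 1)
    (hstep : ∀ x ∈ K, ∃ y ∈ K, e x ≤ α * e y) :
    ∀ x ∈ K, e x = 0 := by
  obtain ⟨x₀, hx₀K, hx₀⟩ := hcp.exists_isMaxOn hne he.continuousOn
  have h0 : e x₀ = 0 := by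
    obtain ⟨y, hyK, hy⟩ := hstep x₀ hx₀K
    have hy' : e x₀ ≤ α * e x₀ := hy.trans (mul_le_mul_of_nonneg_left (hx₀ hyK) hα0)
    nlinarith [henn x₀]
  intro x hx
  exact le_antisymm (h0 ▸ hx₀ hx) (henn x)

/-- the fixed points `X̲` and `X̄` of the bound operators bound the fixed
point set `𝒱*` of the set-based operator: `X̲ ≤ V ≤ X̄` for every `V ∈ 𝒱*`. -/
theorem boundOperators_fixedPoints_bound_fixedPointSet
    (S A : ℕ) (hS : 0 < S) (hA : 0 < A)
    (M : Set (Param S A)) (hMne : M.Nonempty) (hMcp : IsCompact M)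
    (h : (Fin S → ℝ) → Param S A → (Fin S → ℝ))
    (α : ℝ) (hα0 : 0 ≤ α) (hα1 : α < 1)
    (hcontr : ∀ (V V' : Fin S → ℝ), ∀ m ∈ M, ‖h V m - h V' m‖ ≤ α * ‖V - V'‖)
    (hmono : ∀ (V V' : Fin S → ℝ), ∀ m ∈ M, V ≤ V' → h V m ≤ h V' m)
    (hlip : ∀ V : Fin S → ℝ, ∃ K : ℝ, 0 ≤ K ∧
      ∀ m ∈ M, ∀ m' ∈ M, ‖h V m - h V m'‖ ≤ K * dist m m')
    (𝒱star : Set (Fin S → ℝ)) (h𝒱star : 𝒱star.Nonempty ∧ IsCompact 𝒱star ∧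
      Set.image2 h 𝒱star M = 𝒱star)
    (Xlo Xhi : Fin S → ℝ) (hXlo : loOp M h Xlo = Xlo) (hXhi : hiOp M h Xhi = Xhi) :
    ∀ V ∈ 𝒱star, Xlo ≤ V ∧ V ≤ Xhi := by
  have : Nonempty (Fin S) := ⟨⟨0, hS⟩⟩
  obtain ⟨h𝒱ne, h𝒱cp, h𝒱fix⟩ := h𝒱star
  obtain ⟨m₀, hm₀⟩ := hMne
  -- boundedness of images in the m variable
  have hbdd : ∀ (W : Fin S → ℝ) (s : Fin S),
      BddBelow ((fun m => h W m s) '' M) ∧ BddAbove ((fun m => h W m s) '' M) := by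
    intro W s
    obtain ⟨K, hK0, hKlip⟩ := hlip W
    obtain ⟨C, hC⟩ := hMcp.isBounded.subset_closedBall m₀
    have key : ∀ m ∈ M, |h W m s - h W m₀ s| ≤ K * C := by
      intro m hm
      have h1 : |h W m s - h W m₀ s| ≤ ‖h W m - h W m₀‖ := by
        have := norm_le_pi_norm (h W m - h W m₀) s
        simpa using this
      have h2 : ‖h W m - h W m₀‖ ≤ K * dist m m₀ := hKlip m hm m₀ hm₀
      have h3 : dist m m₀ ≤ C := Metric.mem_closedBall.mp (hC hm)
      nlinarith
    constructor
    · refine ⟨h W m₀ s - K * C, ?_⟩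
      rintro x ⟨m, hm, rfl⟩
      have := key m hm
      have := abs_le.mp this
      linarith [this.2]
    · refine ⟨h W m₀ s + K * C, ?_⟩
      rintro x ⟨m, hm, rfl⟩
      have := key m hm
      have := abs_le.mp this
      linarith [this.1]
  -- the two excess functions
  set eL : (Fin S → ℝ) → ℝ := fun W => ‖fun s => max (Xlo s - W s) 0‖ with heL
  set eH : (Fin S → ℝ) → ℝ := fun W => ‖fun s => max (W s - Xhi s) 0‖ with heH
  have heLc : Continuous eL := by
    apply Continuous.norm
    exact continuous_pi fun s => (continuous_const.sub (continuous_apply s)).max continuous_const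
  have heHc : Continuous eH := by
    apply Continuous.norm
    exact continuous_pi fun s => ((continuous_apply s).sub continuous_const).max continuous_const
  -- contraction step under constant shift
  have hshift : ∀ (W : Fin S → ℝ) (c : ℝ), 0 ≤ c → ∀ m ∈ M, ∀ s,
      h (W + fun _ => c) m s ≤ h W m s + α * c := by
    intro W c hc m hm s
    have h1 : h (W + fun _ => c) m s - h W m s ≤ ‖h (W + fun _ => c) m - h W m‖ := by
      have := norm_le_pi_norm (h (W + fun _ => c) m - h W m) s
      have h2 : h (W + fun _ => c) m s - h W m s ≤ |h (W + fun _ => c) m s - h W m s| :=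
        le_abs_self _
      simpa using h2.trans (by simpa using this)
    have h2 : ‖h (W + fun _ => c) m - h W m‖ ≤ α * ‖(W + fun _ => c) - W‖ :=
      hcontr _ _ m hm
    have h3 : (W + fun _ => c) - W = fun _ => c := by ext s'; simp
    rw [h3] at h2
    have h4 : ‖(fun _ => c : Fin S → ℝ)‖ = c := by
      rw [pi_norm_const, Real.norm_eq_abs, abs_of_nonneg hc]
    rw [h4] at h2
    linarith
  -- step lemmas
  have hstepL : ∀ V ∈ 𝒱star, ∃ V' ∈ 𝒱star, eL V ≤ α * eL V' := by
    intro V hV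
    rw [← h𝒱fix] at hV
    obtain ⟨V', hV', m, hm, rfl⟩ := hV
    refine ⟨V', hV', ?_⟩
    have hcnn : 0 ≤ eL V' := norm_nonneg _
    rw [heL]
    apply pi_norm_le_iff_of_nonneg (mul_nonneg hα0 hcnn) |>.mpr
    intro s
    rw [Real.norm_eq_abs, abs_of_nonneg (le_max_right _ _)]
    apply max_le _ (mul_nonneg hα0 hcnn)
    -- Xlo s ≤ h Xlo m s
    have hlo : Xlo s ≤ h Xlo m s := by
      conv_lhs => rw [← hXlo]
      exact csInf_le (hbdd Xlo s).1 ⟨m, hm, rfl⟩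
    -- Xlo ≤ V' + const (eL V')
    have hle : Xlo ≤ V' + fun _ => eL V' := by
      intro s'
      have h1 : Xlo s' - V' s' ≤ max (Xlo s' - V' s') 0 := le_max_left _ _
      have h2 : max (Xlo s' - V' s') 0 ≤ eL V' := by
        have := norm_le_pi_norm (fun t => max (Xlo t - V' t) 0) s'
        rw [Real.norm_eq_abs, abs_of_nonneg (le_max_right _ _)] at this
        exact this
      simp only [Pi.add_apply]
      linarith
    have hmid : h Xlo m s ≤ h (V' + fun _ => eL V') m s := hmono _ _ m hm hle s
    have hhi := hshift V' (eL V') hcnn m hm s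
    linarith
  have hstepH : ∀ V ∈ 𝒱star, ∃ V' ∈ 𝒱star, eH V ≤ α * eH V' := by
    intro V hV
    rw [← h𝒱fix] at hV
    obtain ⟨V', hV', m, hm, rfl⟩ := hV
    refine ⟨V', hV', ?_⟩
    have hcnn : 0 ≤ eH V' := norm_nonneg _
    rw [heH]
    apply pi_norm_le_iff_of_nonneg (mul_nonneg hα0 hcnn) |>.mpr
    intro s
    rw [Real.norm_eq_abs, abs_of_nonneg (le_max_right _ _)]
    apply max_le _ (mul_nonneg hα0 hcnn)
    -- h Xhi m s ≤ Xhi s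
    have hhiB : h Xhi m s ≤ Xhi s := by
      conv_rhs => rw [← hXhi]
      exact le_csSup (hbdd Xhi s).2 ⟨m, hm, rfl⟩
    -- V' ≤ Xhi + const (eH V')
    have hle : V' ≤ Xhi + fun _ => eH V' := by
      intro s'
      have h1 : V' s' - Xhi s' ≤ max (V' s' - Xhi s') 0 := le_max_left _ _
      have h2 : max (V' s' - Xhi s') 0 ≤ eH V' := by
        have := norm_le_pi_norm (fun t => max (V' t - Xhi t) 0) s'
        rw [Real.norm_eq_abs, abs_of_nonneg (le_max_right _ _)] at this
        exact this
      simp only [Pi.add_apply]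
      linarith
    have hmid : h V' m s ≤ h (Xhi + fun _ => eH V') m s := hmono _ _ m hm hle s
    have hhi := hshift Xhi (eH V') (norm_nonneg _) m hm s
    linarith
  have hL0 := shrink_zero 𝒱star h𝒱ne h𝒱cp eL heLc (fun _ => norm_nonneg _) α hα0 hα1 hstepL
  have hH0 := shrink_zero 𝒱star h𝒱ne h𝒱cp eH heHc (fun _ => norm_nonneg _) α hα0 hα1 hstepH
  intro V hV
  constructor
  · intro s
    have h1 : max (Xlo s - V s) 0 ≤ eL V := by
      have := norm_le_pi_norm (fun t => max (Xlo t - V t) 0) s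
      rw [Real.norm_eq_abs, abs_of_nonneg (le_max_right _ _)] at this
      exact this
    rw [hL0 V hV] at h1
    have := le_trans (le_max_left (Xlo s - V s) 0) h1
    linarith
  · intro s
    have h1 : max (V s - Xhi s) 0 ≤ eH V := by
      have := norm_le_pi_norm (fun t => max (V t - Xhi t) 0) s
      rw [Real.norm_eq_abs, abs_of_nonneg (le_max_right _ _)] at this
      exact this
    rw [hH0 V hV] at h1
    have := le_trans (le_max_left (V s - Xhi s) 0) h1
    linarith
end

section
/- Let h be a value operator on ℝ^S × ℳ, and suppose ℳ is nonempty, compact, and satisfies the containment condition with respect to h. Let X̲ and X̄ be the unique fixed points of the bound operators h̲_s(V) = inf_{m ∈ ℳ} h_s(V,m) and h̄_s(V) = sup_{m ∈ ℳ} h_s(V,m), and let 𝒱* be the unique nonempty compact fixed point set of H(𝒱) = { h(V,m) : V ∈ 𝒱, m ∈ ℳ }. Then there exist m̲, m̄ ∈ ℳ with h(X̲, m̲) = X̲ and h(X̄, m̄) = X̄; moreover X̲ ∈ 𝒱* and X̄ ∈ 𝒱*, and they are the least and greatest elements of 𝒱*: X̲_s = inf_{V ∈ 𝒱*} V_s and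 X̄_s = sup_{V ∈ 𝒱*} V_s for every s ∈ Fin S. -/
lemma lo_side {S A : ℕ}
    (M : Set (Param S A)) (hMne : M.Nonempty) (hMcp : IsCompact M)
    (h : (Fin S → ℝ) → Param S A → (Fin S → ℝ))
    (α : ℝ) (hα0 : 0 ≤ α) (hα1 : α < 1)
    (hcontr : ∀ (V V' : Fin S → ℝ), ∀ m ∈ M, ‖h V m - h V' m‖ ≤ α * ‖V - V'‖)
    (hmono : ∀ (V V' : Fin S → ℝ), ∀ m ∈ M, V ≤ V' → h V m ≤ h V' m)
    (hlip : ∀ V : Fin S → ℝ, ∃ K : ℝ, 0 ≤ K ∧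
      ∀ m ∈ M, ∀ m' ∈ M, ‖h V m - h V m'‖ ≤ K * dist m m')
    (hcontainLo : ∀ V : Fin S → ℝ, ∃ ml ∈ M, ∀ s, h V ml s = sInf ((fun m => h V m s) '' M))
    (𝒱star : Set (Fin S → ℝ)) (hne : 𝒱star.Nonempty) (hcp : IsCompact 𝒱star)
    (hfix : Set.image2 h 𝒱star M = 𝒱star)
    (Xlo : Fin S → ℝ) (hXlo : loOp M h Xlo = Xlo) :
    (∃ ml ∈ M, h Xlo ml = Xlo) ∧ Xlo ∈ 𝒱star ∧
    (∀ s, Xlo s = sInf ((fun V : Fin S → ℝ => V s) '' 𝒱star)) := by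
  -- bddBelow of the parameter images
  have hbdd : ∀ (W : Fin S → ℝ) (s : Fin S), BddBelow ((fun m => h W m s) '' M) := by
    intro W s
    obtain ⟨K, hK, hlipW⟩ := hlip W
    obtain ⟨m₀, hm₀⟩ := hMne
    obtain ⟨r, hr⟩ := hMcp.isBounded.subset_closedBall m₀
    refine ⟨h W m₀ s - K * r, ?_⟩
    rintro x ⟨m, hm, rfl⟩
    have h1 : |h W m s - h W m₀ s| ≤ K * dist m m₀ := by
      have := norm_le_pi_norm (h W m - h W m₀) s
      simp only [Pi.sub_apply, Real.norm_eq_abs] at this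
      exact this.trans (hlipW m hm m₀ hm₀)
    have h2 : dist m m₀ ≤ r := by simpa [Metric.mem_closedBall] using hr hm
    have h3 : K * dist m m₀ ≤ K * r := mul_le_mul_of_nonneg_left h2 hK
    have h4 := (abs_le.mp h1).1
    linarith
  obtain ⟨ml, hmlM, hml⟩ := hcontainLo Xlo
  have hfixml : h Xlo ml = Xlo := funext fun s => (hml s).trans (congrFun hXlo s)
  have hmem : Xlo ∈ 𝒱star := by
    obtain ⟨V₀, hV₀⟩ := hne
    set f : (Fin S → ℝ) → (Fin S → ℝ) := fun W => h W ml with hf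
    have hmemseq : ∀ n, f^[n] V₀ ∈ 𝒱star := by
      intro n
      induction n with
      | zero => simpa using hV₀
      | succ n ih =>
          rw [Function.iterate_succ_apply']
          exact hfix ▸ Set.mem_image2_of_mem ih hmlM
    have hdist : ∀ n, ‖f^[n] V₀ - Xlo‖ ≤ α ^ n * ‖V₀ - Xlo‖ := by
      intro n
      induction n with
      | zero => simp
      | succ n ih =>
          rw [Function.iterate_succ_apply']
          calc ‖f (f^[n] V₀) - Xlo‖ = ‖h (f^[n] V₀) ml - h Xlo ml‖ := by rw [hfixml]
          _ ≤ α * ‖f^[n] V₀ - Xlo‖ := hcontr _ _ ml hmlM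
          _ ≤ α * (α ^ n * ‖V₀ - Xlo‖) := mul_le_mul_of_nonneg_left ih hα0
          _ = α ^ (n + 1) * ‖V₀ - Xlo‖ := by ring
    have htend : Filter.Tendsto (fun n => f^[n] V₀) Filter.atTop (nhds Xlo) := by
      rw [tendsto_iff_dist_tendsto_zero]
      have hb : Filter.Tendsto (fun n => α ^ n * ‖V₀ - Xlo‖) Filter.atTop (nhds 0) := by
        simpa using (tendsto_pow_atTop_nhds_zero_of_lt_one hα0 hα1).mul_const ‖V₀ - Xlo‖
      exact squeeze_zero (fun n => dist_nonneg)
        (fun n => by rw [dist_eq_norm]; exact hdist n) hb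
    exact hcp.isClosed.mem_of_tendsto htend (Filter.Eventually.of_forall hmemseq)
  refine ⟨⟨ml, hmlM, hfixml⟩, hmem, ?_⟩
  · -- least element
    obtain ⟨r, hr⟩ := hcp.isBounded.subset_closedBall Xlo
    set B : ℝ := max r 0 with hB
    have hB0 : 0 ≤ B := le_max_right _ _
    have hBbound : ∀ V ∈ 𝒱star, ‖Xlo - V‖ ≤ B := by
      intro V hV
      have := hr hV
      rw [Metric.mem_closedBall] at this
      calc ‖Xlo - V‖ = dist V Xlo := by rw [dist_eq_norm, norm_sub_rev]
      _ ≤ r := this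
      _ ≤ B := le_max_left _ _
    have key : ∀ n, ∀ V ∈ 𝒱star, ∀ s, Xlo s - α ^ n * B ≤ V s := by
      intro n
      induction n with
      | zero =>
          intro V hV s
          have h1 : |(Xlo - V) s| ≤ ‖Xlo - V‖ := by
            have := norm_le_pi_norm (Xlo - V) s
            simpa using this
          have h2 := (abs_le.mp h1).2
          simp only [Pi.sub_apply] at h2
          have := hBbound V hV
          simp only [pow_zero, one_mul]
          linarith
      | succ n ih =>
          intro V hV s
          rw [← hfix] at hV
          obtain ⟨V', hV', m, hm, rfl⟩ := hV
          set c : ℝ := α ^ n * B with hc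
          have hc0 : 0 ≤ c := mul_nonneg (pow_nonneg hα0 n) hB0
          set W' : Fin S → ℝ := fun t => Xlo t - c with hW'
          have hWle : W' ≤ V' := fun t => ih V' hV' t
          obtain ⟨ml', hml'M, hml'⟩ := hcontainLo W'
          -- Xlo s - α * c ≤ h W' ml' s
          have step1 : Xlo s - α * c ≤ h W' ml' s := by
            have hXle : Xlo s ≤ h Xlo ml' s := by
              rw [← congrFun hXlo s]
              exact csInf_le (hbdd Xlo s) ⟨ml', hml'M, rfl⟩
            have hnW : ‖Xlo - W'‖ ≤ c := by
              rw [pi_norm_le_iff_of_nonneg hc0]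
              intro t
              simp [hW', abs_of_nonneg hc0]
            have hd : h Xlo ml' s - h W' ml' s ≤ α * c := by
              have h1 : |(h Xlo ml' - h W' ml') s| ≤ ‖h Xlo ml' - h W' ml'‖ := by
                have := norm_le_pi_norm (h Xlo ml' - h W' ml') s
                simpa using this
              have h2 := (abs_le.mp h1).2
              simp only [Pi.sub_apply] at h2
              have h3 := hcontr Xlo W' ml' hml'M
              have h4 : α * ‖Xlo - W'‖ ≤ α * c := mul_le_mul_of_nonneg_left hnW hα0
              linarith
            linarith
          have step2 : h W' ml' s ≤ h W' m s := by
            rw [hml' s]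
            exact csInf_le (hbdd W' s) ⟨m, hm, rfl⟩
          have step3 : h W' m s ≤ h V' m s := hmono W' V' m hm hWle s
          have : α ^ (n + 1) * B = α * c := by rw [hc]; ring
          rw [this]
          linarith
    intro s
    have hlb : ∀ x ∈ (fun V : Fin S → ℝ => V s) '' 𝒱star, Xlo s ≤ x := by
      rintro x ⟨V, hV, rfl⟩
      have htd : Filter.Tendsto (fun n => Xlo s - α ^ n * B) Filter.atTop
          (nhds (Xlo s - 0 * B)) :=
        Filter.Tendsto.const_sub _
          ((tendsto_pow_atTop_nhds_zero_of_lt_one hα0 hα1).mul_const B)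
      have := le_of_tendsto htd (Filter.Eventually.of_forall (fun n => key n V hV s))
      simpa using this
    exact le_antisymm (le_csInf ⟨Xlo s, Xlo, hmem, rfl⟩ hlb)
      (csInf_le ⟨Xlo s, hlb⟩ ⟨Xlo, hmem, rfl⟩)

lemma sInf_neg_image {T : Type*} (g : T → ℝ) (X : Set T) :
    sInf ((fun t => -(g t)) '' X) = -sSup (g '' X) := by
  have himg : (fun t => -(g t)) '' X = -(g '' X) := by
    ext x
    simp only [Set.mem_image, Set.mem_neg]
    constructor
    · rintro ⟨t, ht, rfl⟩; exact ⟨t, ht, by ring⟩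
    · rintro ⟨t, ht, hx⟩; exact ⟨t, ht, by linarith⟩
  rw [himg, Real.sInf_def, neg_neg]

/-- under the containment condition, the fixed points `X̲`, `X̄` of the
bound operators are attained by parameters `m̲, m̄ ∈ ℳ`, belong to the fixed point set
`𝒱*`, and are its least and greatest elements. -/
theorem containment_extremal_elements (S A : ℕ) (hS : 0 < S) (hA : 0 < A)
    (M : Set (Param S A)) (hMne : M.Nonempty) (hMcp : IsCompact M)
    (h : (Fin S → ℝ) → Param S A → (Fin S → ℝ))
    (α : ℝ) (hα0 : 0 ≤ α) (hα1 : α < 1)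
    (hcontr : ∀ (V V' : Fin S → ℝ), ∀ m ∈ M, ‖h V m - h V' m‖ ≤ α * ‖V - V'‖)
    (hmono : ∀ (V V' : Fin S → ℝ), ∀ m ∈ M, V ≤ V' → h V m ≤ h V' m)
    (hlip : ∀ V : Fin S → ℝ, ∃ K : ℝ, 0 ≤ K ∧
      ∀ m ∈ M, ∀ m' ∈ M, ‖h V m - h V m'‖ ≤ K * dist m m')
    (hcontain : ∀ V : Fin S → ℝ,
      (∃ ml ∈ M, ∀ s, h V ml s = sInf ((fun m => h V m s) '' M)) ∧
      (∃ mu ∈ M, ∀ s, h V mu s = sSup ((fun m => h V m s) '' M)))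
    (𝒱star : Set (Fin S → ℝ)) (h𝒱star : 𝒱star.Nonempty ∧ IsCompact 𝒱star ∧
      Set.image2 h 𝒱star M = 𝒱star)
    (Xlo Xhi : Fin S → ℝ) (hXlo : loOp M h Xlo = Xlo) (hXhi : hiOp M h Xhi = Xhi) :
    (∃ ml ∈ M, h Xlo ml = Xlo) ∧ (∃ mu ∈ M, h Xhi mu = Xhi) ∧
    Xlo ∈ 𝒱star ∧ Xhi ∈ 𝒱star ∧
    (∀ s, Xlo s = sInf ((fun V : Fin S → ℝ => V s) '' 𝒱star)) ∧
    (∀ s, Xhi s = sSup ((fun V : Fin S → ℝ => V s) '' 𝒱star)) := by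
  obtain ⟨hne, hcp, hfix⟩ := h𝒱star
  obtain ⟨hml, hmemlo, hinf⟩ := lo_side M hMne hMcp h α hα0 hα1 hcontr hmono hlip
    (fun V => (hcontain V).1) 𝒱star hne hcp hfix Xlo hXlo
  -- dual operator
  set h' : (Fin S → ℝ) → Param S A → (Fin S → ℝ) := fun V m => -(h (-V) m) with hh'
  have hcontr' : ∀ (V V' : Fin S → ℝ), ∀ m ∈ M, ‖h' V m - h' V' m‖ ≤ α * ‖V - V'‖ := by
    intro V V' m hm
    have he : h' V m - h' V' m = h (-V') m - h (-V) m := by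
      funext t; simp [hh']; ring
    rw [he]
    calc ‖h (-V') m - h (-V) m‖ ≤ α * ‖-V' - -V‖ := hcontr _ _ m hm
    _ = α * ‖V - V'‖ := by rw [neg_sub_neg]
  have hmono' : ∀ (V V' : Fin S → ℝ), ∀ m ∈ M, V ≤ V' → h' V m ≤ h' V' m := by
    intro V V' m hm hVV' t
    have : h (-V') m ≤ h (-V) m := hmono _ _ m hm (neg_le_neg hVV')
    simpa [hh'] using neg_le_neg (this t)
  have hlip' : ∀ V : Fin S → ℝ, ∃ K : ℝ, 0 ≤ K ∧
      ∀ m ∈ M, ∀ m' ∈ M, ‖h' V m - h' V m'‖ ≤ K * dist m m' := by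
    intro V
    obtain ⟨K, hK, hl⟩ := hlip (-V)
    refine ⟨K, hK, fun m hm m' hm' => ?_⟩
    have he : h' V m - h' V m' = h (-V) m' - h (-V) m := by
      funext t; simp [hh']; ring
    rw [he]
    calc ‖h (-V) m' - h (-V) m‖ ≤ K * dist m' m := hl m' hm' m hm
    _ = K * dist m m' := by rw [dist_comm]
  have hcontainLo' : ∀ V : Fin S → ℝ, ∃ ml ∈ M,
      ∀ s, h' V ml s = sInf ((fun m => h' V m s) '' M) := by
    intro V
    obtain ⟨mu, hmu, hmus⟩ := (hcontain (-V)).2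
    refine ⟨mu, hmu, fun s => ?_⟩
    have : (fun m => h' V m s) = fun m => -(h (-V) m s) := by funext m; simp [hh']
    rw [this, sInf_neg_image (fun m => h (-V) m s) M]
    simp [hh', hmus s]
  set 𝒱' : Set (Fin S → ℝ) := Neg.neg '' 𝒱star with h𝒱'
  have hne' : 𝒱'.Nonempty := hne.image _
  have hcp' : IsCompact 𝒱' := hcp.image continuous_neg
  have hfix' : Set.image2 h' 𝒱' M = 𝒱' := by
    rw [h𝒱', Set.image2_image_left]
    have : (fun V m => h' (-V) m) = fun (V : Fin S → ℝ) m => -(h V m) := by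
      funext V m; simp [hh']
    rw [this, ← Set.image_image2, hfix]
  have hXhi' : loOp M h' (-Xhi) = -Xhi := by
    funext s
    have : (fun m => h' (-Xhi) m s) = fun m => -(h Xhi m s) := by funext m; simp [hh']
    simp only [loOp, this, sInf_neg_image (fun m => h Xhi m s) M]
    have := congrFun hXhi s
    simp only [hiOp] at this
    simp [this]
  obtain ⟨⟨mu, hmuM, hmufix⟩, hmemhi, hsup⟩ := lo_side M hMne hMcp h' α hα0 hα1
    hcontr' hmono' hlip' hcontainLo' 𝒱' hne' hcp' hfix' (-Xhi) hXhi'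
  refine ⟨hml, ⟨mu, hmuM, ?_⟩, hmemlo, ?_, hinf, ?_⟩
  · have := congrArg Neg.neg hmufix
    simpa [hh'] using this
  · obtain ⟨V, hV, hVe⟩ := hmemhi
    have : V = Xhi := by
      have := congrArg Neg.neg hVe
      simpa using this
    exact this ▸ hV
  · intro s
    have hs := hsup s
    have himg : (fun V : Fin S → ℝ => V s) '' 𝒱' = (fun V : Fin S → ℝ => -(V s)) '' 𝒱star := by
      rw [h𝒱', Set.image_image]
      rfl
    rw [himg] at hs
    have := sInf_neg_image (fun V : Fin S → ℝ => V s) 𝒱star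
    simp only [Pi.neg_apply] at hs
    linarith [hs, this]
end

section
/- Suppose ℳ ⊆ 𝒫 is nonempty, compact and convex, and all its parameters (C,P) satisfy P s a ∈ Δ_S for all s, a. Then: (1) the unique fixed point W^o of the operator V ↦ (min_{(C,P)∈ℳ} f_s(V,(C,P)))_s exists and satisfies, for every s, W^o_s = min_{π_s ∈ Δ_A} min_{(C,P) ∈ ℳ} Σ_a π_{s,a}·(C s a + γ·Σ_{s'} P s a s' · V s') evaluated at V = W^o, with both minima attained; and (2) the unique fixed point W^r of the operator V ↦ (max_{(C,P)∈ℳ} f_s(V,(C,P)))_s exists and satisfies, for every s, W^r_s = min_{π_s ∈ Δ_A} max_{(C,P) ∈ ℳ} Σ_a π_{s,a}·(C s a + γ·Σ_{s'} P s a s' · V s') evaluated at V = W^r, with the outer minimum attained (i.e., the max-min equals the min-max, so an optimistic policy π^o and a robust policy π^r exist). -/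
/-- The one-state policy-evaluation expression
`Σ_a π_{s,a}·(C s a + γ·Σ_{s'} P s a s' · V s')`. -/
noncomputable def gRow (S A : ℕ) (γ : ℝ) (V : Fin S → ℝ) (πs : Fin A → ℝ)
    (m : Param S A) (s : Fin S) : ℝ :=
  ∑ a, πs a * (m.1 s a + γ * ∑ s', m.2 s a s' * V s')

/-!
Write `q_m(a) = C s a + γ·Σ_{s'} P s a s' · V s'`, so that `f_s(V, m) = min_a q_m(a)`.
Each Bellman operator `V ↦ f(V, m)` is a `γ`-contraction because the rows of `P` lie in `Δ_S`,
and a pointwise infimum or supremum of `γ`-Lipschitz maps is again `γ`-Lipschitz, so both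
operators are contractions. For fixed `m`, the expression `Σ_a π_a q_m(a)` is linear in
`π ∈ Δ_A`, hence minimized at a vertex, with value `f_s(V, m)`; this gives the min-min
characterization. For the min-max, let `w = max_m min_a q_m(a)`. Every vector of the convex set
`{q_m : m ∈ ℳ} ⊆ ℝ^A` has a coordinate `≤ w`, so the set misses the open orthant
`w + ℝ_{>0}^A`, and a hyperplane separating the two has normal `-π` with `π ∈ Δ_A` and
`Σ_a π_a q_m(a) ≤ w` for every `m ∈ ℳ`.
-/

open Set

section Alternative

variable {ι : Type*}

theorem ContinuousLinearMap.nonneg_and_map_nonpos_of_map_lt_on_pos (f : (ι → ℝ) →L[ℝ] ℝ)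
    {u : ℝ} (hf : ∀ x ∈ univ.pi fun _ => Ioi (0 : ℝ), f x < u) :
    0 ≤ u ∧ ∀ x, 0 ≤ x → f x ≤ 0 := by
  have hle : ∀ x, 0 ≤ x → f x ≤ u := by
    intro x hx
    have hcl : x ∈ closure (univ.pi fun _ => Ioi (0 : ℝ)) := by
      rw [closure_pi_set, closure_Ioi]
      exact fun i _ => hx i
    exact closure_minimal (fun y hy => (hf y hy).le) (isClosed_le f.continuous continuous_const) hcl
  have hu : 0 ≤ u := by simpa using hle 0 le_rfl
  refine ⟨hu, fun x hx => le_of_not_gt fun hpos => ?_⟩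
  -- the orthant is a cone, so a suitable multiple of `x` would push `f` above `u`
  have hscaled := hle (((u + 1) / f x) • x) (smul_nonneg (by positivity) hx)
  rw [map_smul, smul_eq_mul, div_mul_cancel₀ _ hpos.ne'] at hscaled
  linarith

variable [Fintype ι]

theorem Convex.exists_mem_stdSimplex_forall_sum_mul_nonpos {K : Set (ι → ℝ)} (hK : Convex ℝ K)
    (hne : K.Nonempty) (hK0 : ∀ x ∈ K, ∃ i, x i ≤ 0) :
    ∃ w ∈ stdSimplex ℝ ι, ∀ x ∈ K, ∑ i, w i * x i ≤ 0 := by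
  classical
  have hdisj : Disjoint (univ.pi fun _ => Ioi (0 : ℝ)) K := by
    refine Set.disjoint_right.2 fun x hx hxpos => ?_
    obtain ⟨i, hi⟩ := hK0 x hx
    exact hi.not_gt (hxpos i (mem_univ i))
  obtain ⟨f, u, hfpos, hfK⟩ := geometric_hahn_banach_open
    (convex_pi fun _ _ => convex_Ioi 0) (isOpen_set_pi finite_univ fun _ _ => isOpen_Ioi) hK hdisj
  obtain ⟨hu, hf⟩ := f.nonneg_and_map_nonpos_of_map_lt_on_pos hfpos
  set c : ι → ℝ := fun i => -f fun j => if i = j then 1 else 0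
  have hfc : ∀ x, f x = -∑ i, c i * x i := fun x => by
    simpa [c, mul_comm] using f.toLinearMap.pi_apply_eq_sum_univ x
  have hc : ∀ i, 0 ≤ c i := fun i => neg_nonneg.2 (hf _ fun j => by dsimp; split_ifs <;> norm_num)
  have hZ : 0 < ∑ i, c i := by
    refine (Finset.sum_nonneg fun i _ => hc i).lt_of_ne fun hZ => ?_
    have hc0 : ∀ i, c i = 0 := fun i =>
      (Finset.sum_eq_zero_iff_of_nonneg fun i _ => hc i).1 hZ.symm i (Finset.mem_univ i)
    obtain ⟨x, hx⟩ := hne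
    have h1 := hfpos (fun _ => 1) fun _ _ => by simp
    have h2 := hfK x hx
    simp only [hfc, hc0, zero_mul, Finset.sum_const_zero, neg_zero] at h1 h2
    linarith
  refine ⟨fun i => c i / ∑ j, c j,
    ⟨fun i => div_nonneg (hc i) hZ.le, by rw [← Finset.sum_div, div_self hZ.ne']⟩, fun x hx => ?_⟩
  have hfx := hfK x hx
  rw [hfc] at hfx
  calc ∑ i, (c i / ∑ j, c j) * x i = (∑ i, c i * x i) / ∑ j, c j := by
        rw [Finset.sum_div]; exact Finset.sum_congr rfl fun i _ => by ring
    _ ≤ 0 := div_nonpos_of_nonpos_of_nonneg (by linarith) hZ.le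

theorem Convex.exists_mem_stdSimplex_forall_sum_mul_le {K : Set (ι → ℝ)} (hK : Convex ℝ K)
    (hne : K.Nonempty) {c : ℝ} (hKc : ∀ x ∈ K, ∃ i, x i ≤ c) :
    ∃ w ∈ stdSimplex ℝ ι, ∀ x ∈ K, ∑ i, w i * x i ≤ c := by
  obtain ⟨w, hw, hwK⟩ := (hK.translate (-fun _ => c)).exists_mem_stdSimplex_forall_sum_mul_nonpos
    (hne.image _) (forall_mem_image.2 fun x hx => by
      obtain ⟨i, hi⟩ := hKc x hx
      exact ⟨i, by simpa using hi⟩)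
  refine ⟨w, hw, fun x hx => ?_⟩
  have hwx := hwK _ (mem_image_of_mem _ hx)
  simp only [Pi.add_apply, Pi.neg_apply, mul_add, Finset.sum_add_distrib, mul_neg,
    Finset.sum_neg_distrib, ← Finset.sum_mul, hw.2, one_mul] at hwx
  linarith

end Alternative

section Lipschitz

variable {ι : Type*}

theorem ciInf_sub_ciInf_le [Nonempty ι] {f g : ι → ℝ} {d : ℝ} (hf : BddBelow (range f))
    (h : ∀ i, f i - g i ≤ d) : (⨅ i, f i) - ⨅ i, g i ≤ d := by
  have : (⨅ i, f i) - d ≤ ⨅ i, g i := le_ciInf fun i => by linarith [ciInf_le hf i, h i]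
  linarith

theorem ciSup_sub_ciSup_le [Nonempty ι] {f g : ι → ℝ} {d : ℝ} (hg : BddAbove (range g))
    (h : ∀ i, f i - g i ≤ d) : (⨆ i, f i) - ⨆ i, g i ≤ d := by
  have : ⨆ i, f i ≤ (⨆ i, g i) + d := ciSup_le fun i => by linarith [le_ciSup hg i, h i]
  linarith

variable {α ι' : Type*} [PseudoMetricSpace α] [Fintype ι'] {K : NNReal} {T : ι → α → ι' → ℝ}

theorem LipschitzWith.apply_sub_apply_le {i : ι} (hT : LipschitzWith K (T i)) (x y : α) (j : ι') :
    T i x j - T i y j ≤ K * dist x y :=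
  (le_abs_self _).trans <| (Real.dist_eq _ _).symm.le.trans <|
    (dist_le_pi_dist (T i x) (T i y) j).trans (hT.dist_le_mul x y)

theorem LipschitzWith.ciInf_apply [Nonempty ι] (hT : ∀ i, LipschitzWith K (T i))
    (hbdd : ∀ x j, BddBelow (range fun i => T i x j)) :
    LipschitzWith K fun x j => ⨅ i, T i x j := by
  refine LipschitzWith.of_dist_le_mul fun x y => (dist_pi_le_iff (by positivity)).2 fun j => ?_
  have h x y i := (hT i).apply_sub_apply_le x y j
  rw [Real.dist_eq, abs_sub_le_iff]
  exact ⟨ciInf_sub_ciInf_le (hbdd x j) (h x y),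
    dist_comm x y ▸ ciInf_sub_ciInf_le (hbdd y j) (h y x)⟩

theorem LipschitzWith.ciSup_apply [Nonempty ι] (hT : ∀ i, LipschitzWith K (T i))
    (hbdd : ∀ x j, BddAbove (range fun i => T i x j)) :
    LipschitzWith K fun x j => ⨆ i, T i x j := by
  refine LipschitzWith.of_dist_le_mul fun x y => (dist_pi_le_iff (by positivity)).2 fun j => ?_
  have h x y i := (hT i).apply_sub_apply_le x y j
  rw [Real.dist_eq, abs_sub_le_iff]
  exact ⟨ciSup_sub_ciSup_le (hbdd y j) (h x y),
    dist_comm x y ▸ ciSup_sub_ciSup_le (hbdd x j) (h y x)⟩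

end Lipschitz

noncomputable def qValue (S A : ℕ) (γ : ℝ) (V : Fin S → ℝ) (m : Param S A) (s : Fin S)
    (a : Fin A) : ℝ :=
  m.1 s a + γ * ∑ s', m.2 s a s' * V s'

noncomputable def optimisticBellman (S A : ℕ) (γ : ℝ) (M : Set (Param S A)) (V : Fin S → ℝ) :
    Fin S → ℝ :=
  fun s => sInf ((fun m => bellman S A γ V m s) '' M)

noncomputable def robustBellman (S A : ℕ) (γ : ℝ) (M : Set (Param S A)) (V : Fin S → ℝ) :
    Fin S → ℝ :=
  fun s => sSup ((fun m => bellman S A γ V m s) '' M)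

section Bellman

variable {S A : ℕ} {γ : ℝ}

theorem bellman_eq_ciInf_qValue (V : Fin S → ℝ) (m : Param S A) (s : Fin S) :
    bellman S A γ V m s = ⨅ a, qValue S A γ V m s a :=
  rfl

theorem gRow_eq_sum_mul_qValue (V : Fin S → ℝ) (π : Fin A → ℝ) (m : Param S A) (s : Fin S) :
    gRow S A γ V π m s = ∑ a, π a * qValue S A γ V m s a :=
  rfl

theorem bellman_le_qValue (V : Fin S → ℝ) (m : Param S A) (s : Fin S) (a : Fin A) :
    bellman S A γ V m s ≤ qValue S A γ V m s a :=
  ciInf_le (Finite.bddBelow_range _) a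

theorem exists_qValue_eq_bellman [Nonempty (Fin A)] (V : Fin S → ℝ) (m : Param S A)
    (s : Fin S) : ∃ a, qValue S A γ V m s a = bellman S A γ V m s :=
  exists_eq_ciInf_of_finite

theorem bellman_le_gRow (V : Fin S → ℝ) {π : Fin A → ℝ} (hπ : π ∈ simplex A) (m : Param S A)
    (s : Fin S) : bellman S A γ V m s ≤ gRow S A γ V π m s :=
  calc bellman S A γ V m s = ∑ a, π a * bellman S A γ V m s := by
        rw [← Finset.sum_mul, hπ.2, one_mul]
    _ ≤ gRow S A γ V π m s := Finset.sum_le_sum fun a _ =>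
        mul_le_mul_of_nonneg_left (bellman_le_qValue V m s a) (hπ.1 a)

theorem gRow_single (V : Fin S → ℝ) (a : Fin A) (m : Param S A) (s : Fin S) :
    gRow S A γ V (Pi.single a 1) m s = qValue S A γ V m s a := by
  simp [gRow_eq_sum_mul_qValue, Pi.single_apply]

theorem continuous_qValue (V : Fin S → ℝ) (s : Fin S) (a : Fin A) :
    Continuous fun m => qValue S A γ V m s a := by
  unfold qValue
  fun_prop

theorem continuous_gRow (V : Fin S → ℝ) (π : Fin A → ℝ) (s : Fin S) :
    Continuous fun m => gRow S A γ V π m s := by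
  unfold gRow
  fun_prop

theorem continuous_bellman [Nonempty (Fin A)] (V : Fin S → ℝ) (s : Fin S) :
    Continuous fun m => bellman S A γ V m s := by
  simp only [bellman_eq_ciInf_qValue, ← Finset.inf'_univ_eq_ciInf]
  exact Continuous.finset_inf'_apply _ fun a _ => continuous_qValue V s a

theorem isLinearMap_qValue (V : Fin S → ℝ) (s : Fin S) :
    IsLinearMap ℝ fun (m : Param S A) a => qValue S A γ V m s a := by
  constructor <;> intros <;> ext <;>
    simp only [qValue, Prod.fst_add, Prod.snd_add, Prod.smul_fst, Prod.smul_snd, Pi.add_apply,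
      Pi.smul_apply, smul_eq_mul, add_mul, Finset.sum_add_distrib, mul_assoc, ← Finset.mul_sum] <;>
    ring

theorem lipschitzWith_qValue (hγ : 0 ≤ γ) {m : Param S A} (hm : ∀ s a, m.2 s a ∈ simplex S)
    (a : Fin A) : LipschitzWith γ.toNNReal fun V s => qValue S A γ V m s a := by
  refine LipschitzWith.of_dist_le_mul fun V W => (dist_pi_le_iff (by positivity)).2 fun s => ?_
  obtain ⟨hp0, hp1⟩ := hm s a
  rw [Real.coe_toNNReal γ hγ, Real.dist_eq]
  calc |qValue S A γ V m s a - qValue S A γ W m s a|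
      = |γ * ∑ s', m.2 s a s' * (V s' - W s')| := by
        congr 1
        simp only [qValue, mul_sub, Finset.sum_sub_distrib]
        ring
    _ = γ * |∑ s', m.2 s a s' * (V s' - W s')| := by rw [abs_mul, abs_of_nonneg hγ]
    _ ≤ γ * ∑ s', m.2 s a s' * dist V W := by
        gcongr
        refine (Finset.abs_sum_le_sum_abs _ _).trans (Finset.sum_le_sum fun s' _ => ?_)
        rw [abs_mul, abs_of_nonneg (hp0 s'), ← Real.dist_eq]
        exact mul_le_mul_of_nonneg_left (dist_le_pi_dist V W s') (hp0 s')
    _ = γ * dist V W := by rw [← Finset.sum_mul, hp1, one_mul]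

theorem lipschitzWith_bellman [Nonempty (Fin A)] (hγ : 0 ≤ γ) {m : Param S A}
    (hm : ∀ s a, m.2 s a ∈ simplex S) : LipschitzWith γ.toNNReal fun V => bellman S A γ V m :=
  LipschitzWith.ciInf_apply (fun a => lipschitzWith_qValue hγ hm a)
    fun _ _ => Finite.bddBelow_range _

end Bellman

section RobustMDP

variable {S A : ℕ} [Nonempty (Fin A)] {γ : ℝ} {M : Set (Param S A)}

theorem contractingWith_optimisticBellman (hγ0 : 0 ≤ γ) (hγ1 : γ < 1) (hMne : M.Nonempty)
    (hMcp : IsCompact M) (hMrow : ∀ m ∈ M, ∀ s a, m.2 s a ∈ simplex S) :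
    ContractingWith γ.toNNReal (optimisticBellman S A γ M) := by
  have : Nonempty M := hMne.to_subtype
  refine ⟨Real.toNNReal_lt_one.2 hγ1, ?_⟩
  rw [show optimisticBellman S A γ M = fun V s => ⨅ m : M, bellman S A γ V m s from
    funext₂ fun _ _ => sInf_image']
  exact LipschitzWith.ciInf_apply (fun m => lipschitzWith_bellman hγ0 (hMrow m m.2))
    fun V s => image_eq_range (fun m => bellman S A γ V m s) M ▸
      hMcp.bddBelow_image (continuous_bellman V s).continuousOn

theorem contractingWith_robustBellman (hγ0 : 0 ≤ γ) (hγ1 : γ < 1) (hMne : M.Nonempty)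
    (hMcp : IsCompact M) (hMrow : ∀ m ∈ M, ∀ s a, m.2 s a ∈ simplex S) :
    ContractingWith γ.toNNReal (robustBellman S A γ M) := by
  have : Nonempty M := hMne.to_subtype
  refine ⟨Real.toNNReal_lt_one.2 hγ1, ?_⟩
  rw [show robustBellman S A γ M = fun V s => ⨆ m : M, bellman S A γ V m s from
    funext₂ fun _ _ => sSup_image']
  exact LipschitzWith.ciSup_apply (fun m => lipschitzWith_bellman hγ0 (hMrow m m.2))
    fun V s => image_eq_range (fun m => bellman S A γ V m s) M ▸
      hMcp.bddAbove_image (continuous_bellman V s).continuousOn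

theorem isLeast_gRow_image_simplex_prod (hMne : M.Nonempty) (hMcp : IsCompact M)
    (V : Fin S → ℝ) (s : Fin S) :
    IsLeast ((fun q : (Fin A → ℝ) × Param S A => gRow S A γ V q.1 q.2 s) '' (simplex A ×ˢ M))
      (optimisticBellman S A γ M V s) := by
  obtain ⟨m₀, hm₀, hmin⟩ := hMcp.exists_isMinOn hMne (continuous_bellman V s).continuousOn
  have hleast : IsLeast ((fun m => bellman S A γ V m s) '' M) (bellman S A γ V m₀ s) :=
    ⟨mem_image_of_mem _ hm₀, forall_mem_image.2 hmin⟩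
  obtain ⟨a₀, ha₀⟩ := exists_qValue_eq_bellman (γ := γ) V m₀ s
  rw [optimisticBellman, hleast.csInf_eq]
  refine ⟨⟨(Pi.single a₀ 1, m₀), ⟨single_mem_stdSimplex ℝ a₀, hm₀⟩, ?_⟩, ?_⟩
  · simp only [gRow_single, ha₀]
  · rintro _ ⟨⟨π, m⟩, ⟨hπ, hm⟩, rfl⟩
    exact (hmin hm).trans (bellman_le_gRow V hπ m s)

theorem isLeast_sSup_gRow_image_simplex (hMne : M.Nonempty) (hMcp : IsCompact M)
    (hMcvx : Convex ℝ M) (V : Fin S → ℝ) (s : Fin S) :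
    IsLeast ((fun π => sSup ((fun m => gRow S A γ V π m s) '' M)) '' simplex A)
      (robustBellman S A γ M V s) := by
  have hbdd : BddAbove ((fun m => bellman S A γ V m s) '' M) :=
    hMcp.bddAbove_image (continuous_bellman V s).continuousOn
  have hle : ∀ π ∈ simplex A,
      robustBellman S A γ M V s ≤ sSup ((fun m => gRow S A γ V π m s) '' M) :=
    fun π hπ => csSup_le (hMne.image _) <| forall_mem_image.2 fun m hm =>
      (bellman_le_gRow V hπ m s).trans <|
        le_csSup (hMcp.bddAbove_image (continuous_gRow V π s).continuousOn) (mem_image_of_mem _ hm)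
  refine ⟨?_, forall_mem_image.2 hle⟩
  obtain ⟨π, hπ, hπM⟩ :=
    (hMcvx.is_linear_image (isLinearMap_qValue V s)).exists_mem_stdSimplex_forall_sum_mul_le
      (hMne.image _) (c := robustBellman S A γ M V s) <| forall_mem_image.2 fun m hm => by
      obtain ⟨a, ha⟩ := exists_qValue_eq_bellman (γ := γ) V m s
      exact ⟨a, ha ▸ le_csSup hbdd (mem_image_of_mem _ hm)⟩
  refine ⟨π, hπ, le_antisymm ?_ (hle π hπ)⟩
  exact csSup_le (hMne.image _) <| forall_mem_image.2 fun m hm => hπM _ (mem_image_of_mem _ hm)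

end RobustMDP

theorem robustMDP_value_vectors_exist_general (S A : ℕ) (hA : 0 < A)
    (γ : ℝ) (hγ0 : 0 < γ) (hγ1 : γ < 1)
    (M : Set (Param S A)) (hMne : M.Nonempty) (hMcp : IsCompact M)
    (hMcvx : Convex ℝ M) (hMrow : ∀ m ∈ M, ∀ s a, m.2 s a ∈ simplex S) :
    (∃! Wo : Fin S → ℝ,
        (fun s => sInf ((fun m => bellman S A γ Wo m s) '' M)) = Wo) ∧
    (∀ Wo : Fin S → ℝ,
      (fun s => sInf ((fun m => bellman S A γ Wo m s) '' M)) = Wo →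
      ∀ s, IsLeast
        ((fun q : (Fin A → ℝ) × Param S A => gRow S A γ Wo q.1 q.2 s) ''
          (simplex A ×ˢ M)) (Wo s)) ∧
    (∃! Wr : Fin S → ℝ,
        (fun s => sSup ((fun m => bellman S A γ Wr m s) '' M)) = Wr) ∧
    (∀ Wr : Fin S → ℝ,
      (fun s => sSup ((fun m => bellman S A γ Wr m s) '' M)) = Wr →
      ∀ s, IsLeast
        ((fun πs : Fin A → ℝ => sSup ((fun m => gRow S A γ Wr πs m s) '' M)) ''
          simplex A) (Wr s)) := by
  have : Nonempty (Fin A) := Fin.pos_iff_nonempty.1 hA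
  have hTo := contractingWith_optimisticBellman hγ0.le hγ1 hMne hMcp hMrow
  have hTr := contractingWith_robustBellman hγ0.le hγ1 hMne hMcp hMrow
  refine ⟨⟨_, hTo.fixedPoint_isFixedPt, fun _ => hTo.fixedPoint_unique⟩, fun Wo hWo s => ?_,
    ⟨_, hTr.fixedPoint_isFixedPt, fun _ => hTr.fixedPoint_unique⟩, fun Wr hWr s => ?_⟩
  · have h := isLeast_gRow_image_simplex_prod (γ := γ) hMne hMcp Wo s
    rwa [show optimisticBellman S A γ M Wo = Wo from hWo] at h
  · have h := isLeast_sSup_gRow_image_simplex (γ := γ) hMne hMcp hMcvx Wr s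
    rwa [show robustBellman S A γ M Wr = Wr from hWr] at h

/-- for nonempty compact convex `ℳ` (with rows in the simplex), the
optimistic value vector `W^o` (fixed point of `min_m f`) and the robust value vector
`W^r` (fixed point of `max_m f`) exist and are characterized as attained min-min and
min-max values, respectively; in particular optimistic and robust policies exist. -/
theorem robustMDP_value_vectors_exist (S A : ℕ) (hS : 0 < S) (hA : 0 < A)
    (γ : ℝ) (hγ0 : 0 < γ) (hγ1 : γ < 1)
    (M : Set (Param S A)) (hMne : M.Nonempty) (hMcp : IsCompact M)
    (hMcvx : Convex ℝ M) (hMrow : ∀ m ∈ M, ∀ s a, m.2 s a ∈ simplex S) :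
    (∃! Wo : Fin S → ℝ,
        (fun s => sInf ((fun m => bellman S A γ Wo m s) '' M)) = Wo) ∧
    (∀ Wo : Fin S → ℝ,
      (fun s => sInf ((fun m => bellman S A γ Wo m s) '' M)) = Wo →
      ∀ s, IsLeast
        ((fun q : (Fin A → ℝ) × Param S A => gRow S A γ Wo q.1 q.2 s) ''
          (simplex A ×ˢ M)) (Wo s)) ∧
    (∃! Wr : Fin S → ℝ,
        (fun s => sSup ((fun m => bellman S A γ Wr m s) '' M)) = Wr) ∧
    (∀ Wr : Fin S → ℝ,
      (fun s => sSup ((fun m => bellman S A γ Wr m s) '' M)) = Wr →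
      ∀ s, IsLeast
        ((fun πs : Fin A → ℝ => sSup ((fun m => gRow S A γ Wr πs m s) '' M)) ''
          simplex A) (Wr s)) :=
  robustMDP_value_vectors_exist_general S A hA γ hγ0 hγ1 M hMne hMcp hMcvx hMrow
end

section
/- Let h be a value operator on ℝ^S × ℳ with ℳ nonempty and compact, let H(𝒱) = { h(V,m) : V ∈ 𝒱, m ∈ ℳ }, and let h̲, h̄ be the bound operators h̲_s(V) = inf_{m ∈ ℳ} h_s(V,m), h̄_s(V) = sup_{m ∈ ℳ} h_s(V,m). Let 𝒱 ⊆ ℝ^S be nonempty and compact with coordinatewise extremal vectors V̲_s = inf_{V ∈ 𝒱} V_s and V̄_s = sup_{V ∈ 𝒱} V_s. Then h̲(V̲) ≤ W ≤ h̄(V̄) componentwise for every W ∈ H(𝒱). Moreover, if ℳ satisfies the containment condition with respect to h and V̲, V̄ ∈ 𝒱, then h̲(V̲) and h̄(V̄) are exactly the coordinatewise infimum and supremum of H(𝒱): h̲_s(V̲) = inf_{W ∈ H(𝒱)} W_s and h̄_s(V̄) = sup_{W ∈ H(𝒱)} W_s for every s. -/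
/-- The containment condition of `ℳ` with respect to a value operator `h`. -/
def ContainmentCondition {S A : ℕ} (M : Set (Param S A))
    (h : (Fin S → ℝ) → Param S A → (Fin S → ℝ)) : Prop :=
  ∀ V : Fin S → ℝ,
    (∃ ml ∈ M, ∀ s, h V ml s = sInf ((fun m => h V m s) '' M)) ∧
    (∃ mu ∈ M, ∀ s, h V mu s = sSup ((fun m => h V m s) '' M))

/-- one-step bounds of the set-based operator `H(𝒱)`: `h̲(V̲) ≤ W ≤ h̄(V̄)`
for every `W ∈ H(𝒱)`; under the containment condition with `V̲, V̄ ∈ 𝒱`, the bounds are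
exactly the coordinatewise infimum and supremum of `H(𝒱)`. -/
theorem oneStep_bounds (S A : ℕ) (hS : 0 < S) (hA : 0 < A)
    (M : Set (Param S A)) (hMne : M.Nonempty) (hMcp : IsCompact M)
    (h : (Fin S → ℝ) → Param S A → (Fin S → ℝ))
    (α : ℝ) (hα0 : 0 ≤ α) (hα1 : α < 1)
    (hcontr : ∀ (V V' : Fin S → ℝ), ∀ m ∈ M, ‖h V m - h V' m‖ ≤ α * ‖V - V'‖)
    (hmono : ∀ (V V' : Fin S → ℝ), ∀ m ∈ M, V ≤ V' → h V m ≤ h V' m)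
    (hlip : ∀ V : Fin S → ℝ, ∃ K : ℝ, 0 ≤ K ∧
      ∀ m ∈ M, ∀ m' ∈ M, ‖h V m - h V m'‖ ≤ K * dist m m')
    (𝒱 : Set (Fin S → ℝ)) (h𝒱ne : 𝒱.Nonempty) (h𝒱cp : IsCompact 𝒱)
    (Vlo Vhi : Fin S → ℝ)
    (hVlo : ∀ s, Vlo s = sInf ((fun V : Fin S → ℝ => V s) '' 𝒱))
    (hVhi : ∀ s, Vhi s = sSup ((fun V : Fin S → ℝ => V s) '' 𝒱)) :
    (∀ W ∈ Set.image2 h 𝒱 M, loOp M h Vlo ≤ W ∧ W ≤ hiOp M h Vhi) ∧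
    (ContainmentCondition M h → Vlo ∈ 𝒱 → Vhi ∈ 𝒱 →
      (∀ s, loOp M h Vlo s
          = sInf ((fun W : Fin S → ℝ => W s) '' Set.image2 h 𝒱 M)) ∧
      (∀ s, hiOp M h Vhi s
          = sSup ((fun W : Fin S → ℝ => W s) '' Set.image2 h 𝒱 M))) := by

  have hcontV : ∀ (V : Fin S → ℝ) (s : Fin S), ContinuousOn (fun m => h V m s) M := by
    intro V s
    obtain ⟨K, hK0, hK⟩ := hlip V
    apply LipschitzOnWith.continuousOn (K := Real.toNNReal K)
    rw [lipschitzOnWith_iff_dist_le_mul]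
    intro m hm m' hm'
    calc dist (h V m s) (h V m' s) ≤ dist (h V m) (h V m') := dist_le_pi_dist _ _ s
      _ = ‖h V m - h V m'‖ := dist_eq_norm _ _
      _ ≤ K * dist m m' := hK m hm m' hm'
      _ = Real.toNNReal K * dist m m' := by rw [Real.coe_toNNReal K hK0]
  have hcpI : ∀ (V : Fin S → ℝ) (s : Fin S), IsCompact ((fun m => h V m s) '' M) :=
    fun V s => hMcp.image_of_continuousOn (hcontV V s)
  have hneI : ∀ (V : Fin S → ℝ) (s : Fin S), ((fun m => h V m s) '' M).Nonempty :=
    fun V s => hMne.image _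
  have hcp𝒱 : ∀ s : Fin S, IsCompact ((fun V : Fin S → ℝ => V s) '' 𝒱) :=
    fun s => h𝒱cp.image (continuous_apply s)
  have hVloLe : ∀ V ∈ 𝒱, Vlo ≤ V := by
    intro V hV s
    rw [hVlo s]
    exact csInf_le (hcp𝒱 s).bddBelow ⟨V, hV, rfl⟩
  have hVhiGe : ∀ V ∈ 𝒱, V ≤ Vhi := by
    intro V hV s
    rw [hVhi s]
    exact le_csSup (hcp𝒱 s).bddAbove ⟨V, hV, rfl⟩
  have part1 : ∀ W ∈ Set.image2 h 𝒱 M, loOp M h Vlo ≤ W ∧ W ≤ hiOp M h Vhi := by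
    rintro W ⟨V, hV, m, hm, rfl⟩
    constructor <;> intro s
    · calc loOp M h Vlo s ≤ h Vlo m s := csInf_le (hcpI Vlo s).bddBelow ⟨m, hm, rfl⟩
        _ ≤ h V m s := hmono Vlo V m hm (hVloLe V hV) s
    · calc h V m s ≤ h Vhi m s := hmono V Vhi m hm (hVhiGe V hV) s
        _ ≤ hiOp M h Vhi s := le_csSup (hcpI Vhi s).bddAbove ⟨m, hm, rfl⟩
  refine ⟨part1, fun hcc hVlo𝒱 hVhi𝒱 => ?_⟩
  have hHne : (Set.image2 h 𝒱 M).Nonempty := h𝒱ne.image2 hMne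
  constructor <;> intro s
  · obtain ⟨⟨ml, hml, hmlEq⟩, -⟩ := hcc Vlo
    have hloEq : loOp M h Vlo s = h Vlo ml s := (hmlEq s).symm
    apply le_antisymm
    · apply le_csInf (hHne.image _)
      rintro x ⟨W, hW, rfl⟩
      exact (part1 W hW).1 s
    · rw [hloEq]
      exact csInf_le ⟨loOp M h Vlo s, by rintro x ⟨W, hW, rfl⟩; exact (part1 W hW).1 s⟩
        ⟨h Vlo ml, Set.mem_image2_of_mem hVlo𝒱 hml, rfl⟩
  · obtain ⟨-, ⟨mu, hmu, hmuEq⟩⟩ := hcc Vhi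
    have hhiEq : hiOp M h Vhi s = h Vhi mu s := (hmuEq s).symm
    apply le_antisymm
    · rw [hhiEq]
      exact le_csSup ⟨hiOp M h Vhi s, by rintro x ⟨W, hW, rfl⟩; exact (part1 W hW).2 s⟩
        ⟨h Vhi mu, Set.mem_image2_of_mem hVhi𝒱 hmu, rfl⟩
    · apply csSup_le (hHne.image _)
      rintro x ⟨W, hW, rfl⟩
      exact (part1 W hW).2 s
end
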